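/- arXiv:2302.10972 — 7 statements merged into one kernel-verified Lean document; each statement's English description precedes it below -/
import Mathlib

section
/- Let X be a finite set and F a family of subsets of X (the winning sets of a Maker-Breaker game). If the sum over all F ∈ 𝓕 of 2^{-|F|} is strictly less than 1/2, then Breaker (playing second) has a winning strategy, i.e., Breaker can claim at least one element of every winning set. -/
open Finset

variable {α : Type*} [DecidableEq α]

/-- Play of a Maker-Breaker game: `MWin P n b U M` holds when, with `n` moves remaining,
`b = true` iff it is Maker's turn, `U` the unclaimed elements and `M` Maker's claimed
elements, Maker can force the final position to satisfy `P` on her claimed set. -/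
def MWin (P : Finset α → Prop) : ℕ → Bool → Finset α → Finset α → Prop
  | 0, _, _, M => P M
  | n + 1, true, U, M => ∃ e ∈ U, MWin P n false (U.erase e) (insert e M)
  | n + 1, false, U, M => ∀ e ∈ U, MWin P n true (U.erase e) M

/-- Maker (playing first) has a winning strategy on board `X` with winning sets `F`:
she can ensure that at the end of the game she has claimed all elements of some `W ∈ F`. -/
def MakerWins (X : Finset α) (F : Set (Finset α)) : Prop :=
  MWin (fun M => ∃ W ∈ F, W ⊆ M) X.card true X ∅

/-- Dual play, recording Breaker's claimed set `B`. -/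
def BWin (Q : Finset α → Prop) : ℕ → Bool → Finset α → Finset α → Prop
  | 0, _, _, B => Q B
  | n + 1, true, U, B => ∀ e ∈ U, BWin Q n false (U.erase e) B
  | n + 1, false, U, B => ∃ e ∈ U, BWin Q n true (U.erase e) (insert e B)

/-- Breaker (playing second) has a winning strategy on board `X` with winning sets `F`:
he can ensure claiming at least one element of every winning set. -/
def BreakerWins (X : Finset α) (F : Set (Finset α)) : Prop :=
  BWin (fun B => ∀ W ∈ F, ∃ e ∈ W, e ∈ B) X.card true X ∅

/-- `MWinIn P n b U M`: Maker can force, within the next `n` half-moves, a position in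
which her claimed set satisfies `P`. -/
def MWinIn (P : Finset α → Prop) : ℕ → Bool → Finset α → Finset α → Prop
  | 0, _, _, M => P M
  | n + 1, true, U, M => P M ∨ ∃ e ∈ U, MWinIn P n false (U.erase e) (insert e M)
  | n + 1, false, U, M => P M ∨ (U.Nonempty ∧ ∀ e ∈ U, MWinIn P n true (U.erase e) M)

/-- Maker (playing first) wins the game on board `X` with winning sets `F`
in at most `k` (Maker) moves. -/
def MakerWinsIn (X : Finset α) (F : Set (Finset α)) (k : ℕ) : Prop :=
  MWinIn (fun M => ∃ W ∈ F, W ⊆ M) (2 * k) true X ∅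

/-! A winning set `W` not yet hit by Breaker carries weight `2^{-|W ∩ U|}`, where `U` is the set
of unclaimed elements, and the potential is the total weight. Maker's move `e` raises the
potential by the danger of `e` (the weight of the surviving sets through `e`); Breaker's move `f`
lowers it by the danger of `f`. Breaker always takes an element of maximal danger, and dangers
only decrease under his moves, so the potential never increases over a round. After Maker's first
move it is at most twice the initial potential `∑ 2^{-|W|} < 1/2`, hence it stays below `1`; at
the end of the game a surviving set would contribute weight `1` on its own. -/

namespace ErdosSelfridge

def Blocks (F : Finset (Finset α)) (B : Finset α) : Prop :=
  ∀ W ∈ F, ∃ e ∈ W, e ∈ B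

noncomputable def weight (U B W : Finset α) : ℝ :=
  if Disjoint W B then 2 ^ (-(#(W ∩ U) : ℤ)) else 0

noncomputable def potential (F : Finset (Finset α)) (U B : Finset α) : ℝ :=
  ∑ W ∈ F, weight U B W

noncomputable def danger (F : Finset (Finset α)) (U B : Finset α) (e : α) : ℝ :=
  ∑ W ∈ F with e ∈ W, weight U B W

variable (F : Finset (Finset α)) (U B : Finset α)

lemma weight_nonneg (W : Finset α) : 0 ≤ weight U B W := by
  unfold weight; split_ifs <;> positivity

lemma weight_erase {e : α} (he : e ∈ U) (W : Finset α) :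
    weight (U.erase e) B W = weight U B W + if e ∈ W then weight U B W else 0 := by
  by_cases hWB : Disjoint W B
  swap
  · simp [weight, hWB]
  by_cases heW : e ∈ W
  · have hcard : #(W ∩ U) = #(W ∩ U.erase e) + 1 := by
      rw [inter_erase, card_erase_add_one (mem_inter.2 ⟨heW, he⟩)]
    simp only [weight, if_pos hWB, if_pos heW, hcard, zpow_neg, zpow_natCast, pow_succ]
    ring
  · simp only [weight, if_pos hWB, if_neg heW, add_zero, inter_erase,
      erase_eq_of_notMem (fun h => heW (mem_inter.1 h).1)]

lemma weight_erase_insert (f : α) (W : Finset α) :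
    weight (U.erase f) (insert f B) W = weight U B W - if f ∈ W then weight U B W else 0 := by
  by_cases hfW : f ∈ W
  · have : ¬Disjoint W (insert f B) := fun h => disjoint_left.1 h hfW (mem_insert_self f B)
    simp [weight, hfW, this]
  · simp only [weight, hfW, if_false, sub_zero, disjoint_insert_right, not_false_eq_true,
      true_and, inter_erase, erase_eq_of_notMem (fun h => hfW (mem_inter.1 h).1)]

lemma danger_nonneg (e : α) : 0 ≤ danger F U B e :=
  sum_nonneg fun W _ => weight_nonneg U B W

lemma potential_nonneg : 0 ≤ potential F U B :=
  sum_nonneg fun W _ => weight_nonneg U B W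

lemma danger_le_potential (e : α) : danger F U B e ≤ potential F U B :=
  sum_le_sum_of_subset_of_nonneg (filter_subset _ F) fun W _ _ => weight_nonneg U B W

lemma potential_erase {e : α} (he : e ∈ U) :
    potential F (U.erase e) B = potential F U B + danger F U B e := by
  simp only [potential, danger, sum_filter, ← sum_add_distrib, weight_erase U B he]

lemma potential_erase_insert (f : α) :
    potential F (U.erase f) (insert f B) = potential F U B - danger F U B f := by
  simp only [potential, danger, sum_filter, ← sum_sub_distrib, weight_erase_insert U B f]

lemma danger_erase_insert_le (f e : α) :
    danger F (U.erase f) (insert f B) e ≤ danger F U B e := by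
  refine sum_le_sum fun W _ => ?_
  rw [weight_erase_insert]
  exact sub_le_self _ (by split_ifs; exacts [weight_nonneg U B W, le_rfl])

lemma blocks_of_potential_empty_lt_one (h : potential F ∅ B < 1) : Blocks F B := by
  intro W hW
  by_contra! hWB
  have hweight : weight ∅ B W = 1 := by
    simp [weight, disjoint_left.2 hWB]
  have := single_le_sum (fun W _ => weight_nonneg ∅ B W) hW
  simp only [potential] at h
  linarith

theorem bWin_false_of_potential_lt_one (h : potential F U B < 1) :
    BWin (Blocks F) #U false U B := by
  induction hU : #U using Nat.strong_induction_on generalizing U B with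
  | _ n ih =>
  match n with
  | 0 =>
    rw [card_eq_zero] at hU
    subst hU
    exact blocks_of_potential_empty_lt_one F B h
  | m + 1 =>
    obtain ⟨f, hfU, hf_max⟩ := exists_max_image U (danger F U B) (card_pos.1 (by omega))
    have hcard : #(U.erase f) = m := by rw [card_erase_of_mem hfU, hU]; rfl
    have hpot' : potential F (U.erase f) (insert f B) ≤ potential F U B - danger F U B f :=
      (potential_erase_insert F U B f).le
    refine ⟨f, hfU, ?_⟩
    match m with
    | 0 =>
      rw [card_eq_zero] at hcard
      rw [hcard] at hpot'
      exact blocks_of_potential_empty_lt_one F _ (by linarith [danger_nonneg F U B f])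
    | k + 1 =>
      intro e he
      refine ih k (by omega) _ _ ?_ (by rw [card_erase_of_mem he, hcard]; rfl)
      rw [potential_erase F _ _ he]
      linarith [danger_erase_insert_le F U B f e, hf_max e (mem_of_mem_erase he)]

theorem bWin_true_of_two_mul_potential_lt_one (h : 2 * potential F U B < 1) :
    BWin (Blocks F) #U true U B := by
  rcases hU : #U with _ | m
  · rw [card_eq_zero] at hU
    subst hU
    exact blocks_of_potential_empty_lt_one F B (by linarith [potential_nonneg F ∅ B])
  · intro e he
    have hcard : #(U.erase e) = m := by rw [card_erase_of_mem he, hU]; rfl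
    rw [← hcard]
    refine bWin_false_of_potential_lt_one F _ B ?_
    rw [potential_erase F U B he]
    linarith [danger_le_potential F U B e]

end ErdosSelfridge

/-- **Erdős–Selfridge criterion.** If `X` is a finite board and `F` a (finite) family of
winning subsets of `X` with `∑_{W ∈ F} 2^{-|W|} < 1/2`, then Breaker, playing second,
has a winning strategy: he can claim at least one element of every winning set. -/
theorem stmt0 {α : Type*} [DecidableEq α] (X : Finset α) (F : Finset (Finset α))
    (hFX : ∀ W ∈ F, W ⊆ X)
    (hsum : ∑ W ∈ F, (2 : ℝ) ^ (-(W.card : ℤ)) < 1 / 2) :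
    BreakerWins X {W | W ∈ F} := by
  have hpot : ErdosSelfridge.potential F X ∅ = ∑ W ∈ F, (2 : ℝ) ^ (-(W.card : ℤ)) :=
    sum_congr rfl fun W hW => by
      rw [ErdosSelfridge.weight, if_pos (disjoint_empty_right W), inter_eq_left.2 (hFX W hW)]
  exact ErdosSelfridge.bWin_true_of_two_mul_potential_lt_one F X ∅ (by linarith)
end

section
/- Let (E₁, 𝓕₁) and (E₂, 𝓕₂) be two Maker-Breaker games. If Maker has a winning strategy in one of the two games, then Maker has a winning strategy in the union game (E₁ ∪ E₂, 𝓕₁ ∪ 𝓕₂). Moreover, if E₁ ∩ E₂ = ∅, the converse holds: if Maker wins the union game, she wins at least one of the two component games. -/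
open Finset

variable {α : Type*} [DecidableEq α]

/-! Both directions are strategy simulations, using that "Maker's set contains a winning set" is
upward closed. If Maker wins on `E₁`, she plays her strategy there inside the union; when Breaker
answers off the simulated board, or the simulated move is already hers, she moves arbitrarily,
and a spare tempo or extra claimed element never hurts. Conversely, if `E₁` and `E₂`
are disjoint and Breaker wins both components, he answers every Maker move in the component where
it was made, with his strategy there, and arbitrarily when that answer is no longer available;
every winning set of the union lies in one component, so Maker never completes one. -/

section

variable {P Q : Finset α → Prop} {n : ℕ} {b : Bool} {e : α} {U M : Finset α}

theorem MWin.imp (hPQ : ∀ M, P M → Q M) (h : MWin P n b U M) : MWin Q n b U M := by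
  induction n generalizing b U M with
  | zero => cases b <;> exact hPQ M h
  | succ n ih =>
    cases b with
    | false => exact fun e he => ih (h e he)
    | true => obtain ⟨e, he, h⟩ := h; exact ⟨e, he, ih h⟩

/-- Maker wins from the position with free elements `U` and her claimed set `M`, being to move
iff `b`; play goes on until the board is full. -/
def MakerWinsFrom (P : Finset α → Prop) (b : Bool) (U M : Finset α) : Prop :=
  MWin P U.card b U M

theorem makerWinsFrom_empty : MakerWinsFrom P b ∅ M ↔ P M := by
  cases b <;> rfl

theorem makerWinsFrom_true_iff (hU : U.Nonempty) :
    MakerWinsFrom P true U M ↔ ∃ e ∈ U, MakerWinsFrom P false (U.erase e) (insert e M) := by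
  obtain ⟨n, hn⟩ : ∃ n, U.card = n + 1 := Nat.exists_eq_add_one.2 (card_pos.2 hU)
  unfold MakerWinsFrom
  rw [hn, MWin]
  refine exists_congr fun e => and_congr_right fun he => ?_
  rw [card_erase_of_mem he, hn, Nat.add_sub_cancel]

theorem makerWinsFrom_false_iff (hU : U.Nonempty) :
    MakerWinsFrom P false U M ↔ ∀ e ∈ U, MakerWinsFrom P true (U.erase e) M := by
  obtain ⟨n, hn⟩ : ∃ n, U.card = n + 1 := Nat.exists_eq_add_one.2 (card_pos.2 hU)
  unfold MakerWinsFrom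
  rw [hn, MWin]
  refine forall₂_congr fun e he => ?_
  rw [card_erase_of_mem he, hn, Nat.add_sub_cancel]

theorem MakerWinsFrom.of_maker_move (he : e ∈ U)
    (h : MakerWinsFrom P false (U.erase e) (insert e M)) : MakerWinsFrom P true U M :=
  (makerWinsFrom_true_iff ⟨e, he⟩).2 ⟨e, he, h⟩

theorem MakerWinsFrom.breaker_move (h : MakerWinsFrom P false U M) (he : e ∈ U) :
    MakerWinsFrom P true (U.erase e) M :=
  (makerWinsFrom_false_iff ⟨e, he⟩).1 h e he

theorem makerWinsFrom_of_holds (hP : Monotone P) (h : P M) : MakerWinsFrom P b U M := by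
  induction U using Finset.strongInduction generalizing b M with
  | H U ih =>
    rcases U.eq_empty_or_nonempty with rfl | ⟨e, he⟩
    · exact makerWinsFrom_empty.2 h
    cases b with
    | false => exact (makerWinsFrom_false_iff ⟨e, he⟩).2 fun f hf => ih _ (erase_ssubset hf) h
    | true => exact .of_maker_move he (ih _ (erase_ssubset he) (hP (subset_insert e M) h))

theorem MakerWinsFrom.holds_union (hP : Monotone P) (h : MakerWinsFrom P b U M) : P (M ∪ U) := by
  induction U using Finset.strongInduction generalizing b M with
  | H U ih =>
    rcases U.eq_empty_or_nonempty with rfl | ⟨e, he⟩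
    · simpa using makerWinsFrom_empty.1 h
    cases b with
    | false =>
      exact hP (union_subset_union_right (erase_subset e U))
        (ih _ (erase_ssubset he) (h.breaker_move he))
    | true =>
      obtain ⟨f, hf, h⟩ := (makerWinsFrom_true_iff ⟨e, he⟩).1 h
      have := ih _ (erase_ssubset hf) h
      rwa [insert_union, ← union_insert, insert_erase hf] at this

-- `b ≤ b'` in the order `false < true`: Maker may gain the move, never lose it.
theorem MakerWinsFrom.mono {b b' : Bool} {U V M N : Finset α} (hP : Monotone P) (hb : b ≤ b')
    (hMN : M ⊆ N) (hUV : U ⊆ V ∪ N) (h : MakerWinsFrom P b U M) : MakerWinsFrom P b' V N := by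
  by_cases hPN : P N
  · exact makerWinsFrom_of_holds hP hPN
  obtain ⟨x, hxU, hxN⟩ : ∃ x ∈ U, x ∉ N :=
    not_subset.1 fun hUN => hPN (hP (union_subset hMN hUN) (h.holds_union hP))
  have hxV : x ∈ V := (mem_union.1 (hUV hxU)).resolve_right hxN
  cases b' with
  | false =>
    obtain rfl : b = false := le_bot_iff.1 hb
    refine (makerWinsFrom_false_iff ⟨x, hxV⟩).2 fun f hf => ?_
    by_cases hfU : f ∈ U
    · exact mono hP le_rfl hMN (by grind) (h.breaker_move hfU)
    · exact mono hP bot_le hMN (by grind) h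
  | true =>
    cases b with
    | false =>
      exact .of_maker_move hxV (mono hP le_rfl (hMN.trans (subset_insert x N)) (by grind) h)
    | true =>
      obtain ⟨e, heU, h⟩ := (makerWinsFrom_true_iff ⟨x, hxU⟩).1 h
      by_cases heV : e ∈ V
      · exact .of_maker_move heV (mono hP le_rfl (insert_subset_insert e hMN) (by grind) h)
      · have heN : e ∈ N := (mem_union.1 (hUV heU)).resolve_left heV
        exact mono hP bot_le (insert_subset heN hMN) (by grind) h
termination_by U.card + V.card
decreasing_by
  all_goals first
    | exact Nat.add_lt_add (card_erase_lt_of_mem ‹_›) (card_erase_lt_of_mem ‹_›)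
    | exact Nat.add_lt_add_left (card_erase_lt_of_mem ‹_›) _
    | exact Nat.add_lt_add_right (card_erase_lt_of_mem ‹_›) _

/-- Breaker's bookkeeping for the union of games on disjoint boards `E₁` and `E₂`: `(U₁, M₁)` and
`(U₂, M₂)` are positions of the two component games shadowing the position `(V, M)` of the
union. Moves Breaker makes off his component strategies stay free in the components, hence only
inclusions. -/
structure Tracks (E₁ E₂ V M U₁ M₁ U₂ M₂ : Finset α) : Prop where
  board_subset : V ⊆ E₁ ∪ E₂
  board_left : V ∩ E₁ ⊆ U₁
  board_right : V ∩ E₂ ⊆ U₂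
  claimed_left : M ∩ E₁ ⊆ M₁
  claimed_right : M ∩ E₂ ⊆ M₂

namespace Tracks

variable {E₁ E₂ V M U₁ M₁ U₂ M₂ : Finset α} {e f g : α}

theorem symm (h : Tracks E₁ E₂ V M U₁ M₁ U₂ M₂) : Tracks E₂ E₁ V M U₂ M₂ U₁ M₁ where
  board_subset := union_comm E₁ E₂ ▸ h.board_subset
  board_left := h.board_right
  board_right := h.board_left
  claimed_left := h.claimed_right
  claimed_right := h.claimed_left

theorem maker_move (h : Tracks E₁ E₂ V M U₁ M₁ U₂ M₂) (hE : Disjoint E₁ E₂) (he : e ∈ E₁) :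
    Tracks E₁ E₂ (V.erase e) (insert e M) (U₁.erase e) (insert e M₁) U₂ M₂ where
  board_subset := (erase_subset e V).trans h.board_subset
  board_left := by grind [h.board_left]
  board_right := by grind [h.board_right]
  claimed_left := by grind [h.claimed_left]
  claimed_right := by grind [h.claimed_right, disjoint_left.1 hE he]

theorem breaker_move (h : Tracks E₁ E₂ V M U₁ M₁ U₂ M₂) (hfg : f = g ∨ f ∉ V) :
    Tracks E₁ E₂ (V.erase g) M (U₁.erase f) M₁ U₂ M₂ where
  board_subset := (erase_subset g V).trans h.board_subset
  board_left := by grind [h.board_left]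
  board_right := by grind [h.board_right]
  claimed_left := h.claimed_left
  claimed_right := h.claimed_right

end Tracks

theorem exists_breaker_move {Q : Finset α → Prop} {U V M : Finset α}
    (hV : V.Nonempty) (h : ¬MakerWinsFrom Q false U M) :
    ∃ f, ∃ g ∈ V, (f = g ∨ f ∉ V) ∧ ¬MakerWinsFrom Q true (U.erase f) M := by
  obtain ⟨g, hg⟩ := hV
  rcases U.eq_empty_or_nonempty with rfl | hU
  · exact ⟨g, g, hg, .inl rfl, by simpa [makerWinsFrom_empty] using h⟩
  obtain ⟨f, -, hf⟩ : ∃ f ∈ U, ¬MakerWinsFrom Q true (U.erase f) M := by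
    simpa [makerWinsFrom_false_iff hU] using h
  by_cases hfV : f ∈ V
  · exact ⟨f, f, hfV, .inl rfl, hf⟩
  · exact ⟨f, g, hg, .inr hfV, hf⟩

theorem not_makerWinsFrom_of_tracks {P Q₁ Q₂ : Finset α → Prop} {b : Bool}
    {E₁ E₂ V M U₁ M₁ U₂ M₂ : Finset α} (hQ₁ : Monotone Q₁) (hQ₂ : Monotone Q₂)
    (hP : ∀ N, P N → Q₁ (N ∩ E₁) ∨ Q₂ (N ∩ E₂)) (hE : Disjoint E₁ E₂)
    (hT : Tracks E₁ E₂ V M U₁ M₁ U₂ M₂)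
    (h₁ : ¬MakerWinsFrom Q₁ b U₁ M₁) (h₂ : ¬MakerWinsFrom Q₂ true U₂ M₂) :
    ¬MakerWinsFrom P b V M := by
  rcases V.eq_empty_or_nonempty with rfl | hV
  · rw [makerWinsFrom_empty]
    intro hPM
    rcases hP M hPM with hM | hM
    · exact h₁ (makerWinsFrom_of_holds hQ₁ (hQ₁ hT.claimed_left hM))
    · exact h₂ (makerWinsFrom_of_holds hQ₂ (hQ₂ hT.claimed_right hM))
  cases b with
  | false =>
    obtain ⟨f, g, hg, hfg, hf⟩ := exists_breaker_move hV h₁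
    exact fun h => not_makerWinsFrom_of_tracks hQ₁ hQ₂ hP hE (hT.breaker_move hfg) hf h₂
      (h.breaker_move hg)
  | true =>
    rw [makerWinsFrom_true_iff hV]
    rintro ⟨e, heV, h⟩
    rcases mem_union.1 (hT.board_subset heV) with he | he
    · have heU : e ∈ U₁ := hT.board_left (mem_inter.2 ⟨heV, he⟩)
      exact not_makerWinsFrom_of_tracks hQ₁ hQ₂ hP hE (hT.maker_move hE he)
        (fun h => h₁ (.of_maker_move heU h)) h₂ h
    · have heU : e ∈ U₂ := hT.board_right (mem_inter.2 ⟨heV, he⟩)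
      exact not_makerWinsFrom_of_tracks hQ₂ hQ₁ (fun N hN => (hP N hN).symm) hE.symm
        (hT.symm.maker_move hE.symm he) (fun h => h₂ (.of_maker_move heU h)) h₁ h
termination_by V.card
decreasing_by all_goals exact card_erase_lt_of_mem ‹_›

theorem monotone_exists_subset {β : Type*} (F : Set (Finset β)) :
    Monotone fun M : Finset β => ∃ W ∈ F, W ⊆ M :=
  fun _ _ hMN ⟨W, hW, hWM⟩ => ⟨W, hW, hWM.trans hMN⟩

theorem MakerWins.mono {E E' : Finset α} {F F' : Set (Finset α)} (hE : E ⊆ E') (hF : F ⊆ F')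
    (h : MakerWins E F) : MakerWins E' F' :=
  MakerWinsFrom.mono (monotone_exists_subset F') le_rfl subset_rfl (hE.trans subset_union_left)
    (h.imp fun _ ⟨W, hW, hWM⟩ => ⟨W, hF hW, hWM⟩)

theorem MakerWins.of_union {E₁ E₂ : Finset α} {F₁ F₂ : Set (Finset α)} (hE : Disjoint E₁ E₂)
    (h₁ : ∀ W ∈ F₁, W ⊆ E₁) (h₂ : ∀ W ∈ F₂, W ⊆ E₂) (h : MakerWins (E₁ ∪ E₂) (F₁ ∪ F₂)) :
    MakerWins E₁ F₁ ∨ MakerWins E₂ F₂ := by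
  by_contra! hB
  refine not_makerWinsFrom_of_tracks (monotone_exists_subset F₁) (monotone_exists_subset F₂) ?_ hE
    ⟨subset_rfl, inter_subset_right, inter_subset_right, by simp, by simp⟩ hB.1 hB.2 h
  rintro N ⟨W, hW | hW, hWN⟩
  · exact .inl ⟨W, hW, subset_inter hWN (h₁ W hW)⟩
  · exact .inr ⟨W, hW, subset_inter hWN (h₂ W hW)⟩

end

/-- Union of two Maker-Breaker games: if Maker wins one of `(E₁,𝓕₁)`, `(E₂,𝓕₂)`, she wins
the union `(E₁ ∪ E₂, 𝓕₁ ∪ 𝓕₂)`; and if `E₁ ∩ E₂ = ∅`, the converse also holds. -/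
theorem stmt2 {α : Type*} [DecidableEq α] (E₁ E₂ : Finset α)
    (F₁ F₂ : Set (Finset α))
    (h₁ : ∀ W ∈ F₁, W ⊆ E₁) (h₂ : ∀ W ∈ F₂, W ⊆ E₂) :
    ((MakerWins E₁ F₁ ∨ MakerWins E₂ F₂) → MakerWins (E₁ ∪ E₂) (F₁ ∪ F₂)) ∧
      (Disjoint E₁ E₂ →
        (MakerWins (E₁ ∪ E₂) (F₁ ∪ F₂) → MakerWins E₁ F₁ ∨ MakerWins E₂ F₂)) :=
  ⟨fun h => h.elim (·.mono subset_union_left Set.subset_union_left)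
      (·.mono subset_union_right Set.subset_union_right),
    fun hE => MakerWins.of_union hE h₁ h₂⟩
end

section
/- Let ℓ ≥ 1 and let T be a tree with maximum degree at most 2ℓ−2 such that at most one vertex of T has degree exactly 2ℓ−2. Then Breaker has a winning strategy in the K_{1,ℓ}-game on T. -/
open Finset

variable {α : Type*} [DecidableEq α]

open SimpleGraph

/-- Winning sets of the `K_{1,ℓ}`-game on `G`: sets of `ℓ` edges of `G` incident to a
common vertex. -/
def starSets {V : Type*} (G : SimpleGraph V) (ℓ : ℕ) : Set (Finset (Sym2 V)) :=
  {W | (∀ e ∈ W, e ∈ G.edgeSet) ∧ W.card = ℓ ∧ ∃ v : V, ∀ e ∈ W, v ∈ e}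

/-!
Root `T` at a vertex `r` of maximum degree and, at every vertex, pair up the edges to its
children, leaving at most one unpaired. Breaker answers each move of Maker inside a pair by
taking the partner, so Maker never owns a whole pair. A star at `u` avoiding whole pairs then
holds at most half of the child edges at `u` (rounded up) plus the edge to the parent, i.e. at
most `(deg u + 2) / 2` edges off the root and `(deg r + 1) / 2` at the root. Both are below `ℓ`,
since `deg r ≤ 2ℓ - 2` and, `r` having maximum degree, every other vertex has degree at most
`2ℓ - 3`.
-/

open Function

def IsPairingOn (p : α → α) (D : Finset α) : Prop :=
  ∀ x ∈ D, p x ∈ D ∧ p x ≠ x ∧ p (p x) = x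

namespace IsPairingOn

variable {p f : α → α} {D d : Finset α}

lemma union (hf : IsPairingOn f d) (hp : IsPairingOn p D) (hdD : Disjoint d D) :
    IsPairingOn (d.piecewise f p) (d ∪ D) := by
  intro x hx
  rcases mem_union.mp hx with hx | hx
  · obtain ⟨h₁, h₂, h₃⟩ := hf x hx
    simp_all
  · have hxd : x ∉ d := disjoint_right.mp hdD hx
    obtain ⟨h₁, h₂, h₃⟩ := hp x hx
    have hpxd : p x ∉ d := disjoint_right.mp hdD h₁
    simp_all

lemma two_mul_card_inter_le {W : Finset α} (hp : IsPairingOn p D)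
    (hW : ∀ x ∈ D, x ∈ W → p x ∉ W) : 2 * #(W ∩ D) ≤ #D := by
  set A := W ∩ D
  have hinj : Set.InjOn p A := fun x hx y hy hxy => by
    rw [← (hp x (mem_inter.mp hx).2).2.2, hxy, (hp y (mem_inter.mp hy).2).2.2]
  have hdisj : Disjoint A (A.image p) := by
    refine disjoint_left.mpr fun x hxA hx => ?_
    obtain ⟨y, hyA, rfl⟩ := mem_image.mp hx
    exact hW y (mem_inter.mp hyA).2 (mem_inter.mp hyA).1 (mem_inter.mp hxA).1
  have himage : A.image p ⊆ D := image_subset_iff.mpr fun x hx => (hp x (mem_inter.mp hx).2).1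
  calc 2 * #A = #(A ∪ A.image p) := by
        rw [card_union_of_disjoint hdisj, card_image_of_injOn hinj]; ring
    _ ≤ #D := card_le_card (union_subset inter_subset_right himage)

end IsPairingOn

lemma isPairingOn_swap {a b : α} (hab : a ≠ b) : IsPairingOn (Equiv.swap a b) {a, b} := by
  intro x hx
  rcases mem_insert.mp hx with rfl | hx
  · simp [hab.symm]
  · rw [mem_singleton.mp hx]; simp [hab]

lemma exists_isPairingOn_card_sdiff_le_one (s : Finset α) :
    ∃ (p : α → α) (D : Finset α), D ⊆ s ∧ #(s \ D) ≤ 1 ∧ IsPairingOn p D := by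
  induction s using Finset.strongInduction with
  | H s ih =>
  by_cases hs : #s ≤ 1
  · exact ⟨id, ∅, empty_subset s, by simpa using hs, by simp [IsPairingOn]⟩
  obtain ⟨a, ha, b, hb, hab⟩ := one_lt_card.mp (not_le.mp hs)
  have hsub : (s.erase a).erase b ⊂ s :=
    (erase_ssubset (mem_erase.mpr ⟨hab.symm, hb⟩)).trans (erase_ssubset ha)
  obtain ⟨p, D, hDs, hcard, hp⟩ := ih _ hsub
  have hdisj : Disjoint {a, b} D := by
    simp only [disjoint_insert_left, disjoint_singleton_left]
    exact ⟨fun h => by simpa using hDs h, fun h => by simpa using hDs h⟩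
  refine ⟨({a, b} : Finset α).piecewise (Equiv.swap a b) p, {a, b} ∪ D, ?_, ?_,
    (isPairingOn_swap hab).union hp hdisj⟩
  · exact union_subset (by simp [insert_subset_iff, ha, hb]) (hDs.trans hsub.subset)
  · convert hcard using 2
    ext x
    simp only [mem_sdiff, mem_union, mem_insert, mem_singleton, mem_erase]
    tauto

lemma exists_isPairingOn_of_pairwise_disjoint {ι : Type*} [DecidableEq ι] {c : ι → Finset α}
    (hc : Pairwise (Disjoint on c)) (S : Finset ι) :
    ∃ (p : α → α) (D : Finset α), D ⊆ S.biUnion c ∧ IsPairingOn p D ∧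
      ∀ i ∈ S, (∀ x ∈ c i ∩ D, p x ∈ c i) ∧ #(c i \ D) ≤ 1 := by
  induction S using Finset.induction_on with
  | empty => exact ⟨id, ∅, empty_subset _, by simp [IsPairingOn], by simp⟩
  | insert i S hi ih =>
  obtain ⟨p, D, hDS, hp, hblocks⟩ := ih
  obtain ⟨f, d, hdc, hcard, hf⟩ := exists_isPairingOn_card_sdiff_le_one (c i)
  have hcD : Disjoint (c i) D :=
    (disjoint_biUnion_right _ _ _).mpr (fun j hj => hc (ne_of_mem_of_not_mem hj hi).symm)
      |>.mono_right hDS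
  refine ⟨d.piecewise f p, d ∪ D, ?_, hf.union hp (hcD.mono_left hdc), ?_⟩
  · rw [biUnion_insert]; exact union_subset_union hdc hDS
  intro j hj
  rcases mem_insert.mp hj with rfl | hjS
  · refine ⟨fun x hx => ?_,
      (card_le_card (sdiff_subset_sdiff subset_rfl subset_union_left)).trans hcard⟩
    obtain ⟨hxc, hxd | hxD⟩ := mem_inter.mp hx |>.imp_right mem_union.mp
    · rw [piecewise_eq_of_mem _ _ _ hxd]; exact hdc (hf x hxd).1
    · exact absurd hxD (disjoint_left.mp hcD hxc)
  · have hij : Disjoint (c i) (c j) := hc (ne_of_mem_of_not_mem hjS hi).symm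
    refine ⟨fun x hx => ?_,
      (card_le_card (sdiff_subset_sdiff subset_rfl subset_union_right)).trans (hblocks j hjS).2⟩
    obtain ⟨hxc, hxd | hxD⟩ := mem_inter.mp hx |>.imp_right mem_union.mp
    · exact absurd hxc (disjoint_left.mp hij (hdc hxd))
    · rw [piecewise_eq_of_notMem _ _ _ (fun hxd => disjoint_left.mp hij (hdc hxd) hxc)]
      exact (hblocks j hjS).1 x (mem_inter.mpr ⟨hxc, hxD⟩)

lemma two_mul_card_le_of_isPairingOn {p : α → α} {D c s W : Finset α} (hp : IsPairingOn p D)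
    (hW : ∀ x ∈ D, x ∈ W → p x ∉ W) (hcs : c ⊆ s) (hWs : W ⊆ s)
    (hcD : ∀ x ∈ c ∩ D, p x ∈ c) (hc : #(c \ D) ≤ 1) :
    2 * #W ≤ #s + #(s \ c) + 1 := by
  have hpc : IsPairingOn p (c ∩ D) := fun x hx =>
    ⟨mem_inter.mpr ⟨hcD x hx, (hp x (mem_inter.mp hx).2).1⟩, (hp x (mem_inter.mp hx).2).2⟩
  have hpairs := hpc.two_mul_card_inter_le (W := W) fun x hx => hW x (mem_inter.mp hx).2
  have hsplit : W ⊆ (W ∩ (c ∩ D)) ∪ (c \ D) ∪ (s \ c) := by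
    intro x hx
    simp only [mem_union, mem_inter, mem_sdiff]
    have := hWs hx
    tauto
  have hW_le := card_le_card hsplit
  have hunion₁ := card_union_le (W ∩ (c ∩ D) ∪ c \ D) (s \ c)
  have hunion₂ := card_union_le (W ∩ (c ∩ D)) (c \ D)
  have hc_eq := card_inter_add_card_sdiff c D
  have hs_eq := card_sdiff_add_card_eq_card hcs
  omega

lemma IsPairingOn.hit_or_free_erase_erase {p : α → α} {D U B : Finset α} {e e' : α}
    (hp : IsPairingOn p D)
    (hinv : ∀ x ∈ D, x ∈ B ∨ p x ∈ B ∨ x ∈ U ∧ p x ∈ U)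
    (hreply : e ∈ D → p e ∈ U.erase e → e' = p e) :
    ∀ x ∈ D, x ∈ insert e' B ∨ p x ∈ insert e' B ∨
      x ∈ (U.erase e).erase e' ∧ p x ∈ (U.erase e).erase e' := by
  intro x hx
  obtain ⟨hpxD, hpx, hppx⟩ := hp x hx
  rcases hinv x hx with h | h | ⟨hxU, hpxU⟩
  · exact .inl (mem_insert_of_mem h)
  · exact .inr (.inl (mem_insert_of_mem h))
  by_cases hxe : x = e
  · subst hxe; simp_all
  by_cases hpxe : p x = e
  · subst hpxe; simp_all
  simp only [mem_insert, mem_erase]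
  tauto

lemma bWin_of_isPairingOn {p : α → α} {D : Finset α} (hp : IsPairingOn p D)
    {Q : Finset α → Prop} (hQ : ∀ B, (∀ x ∈ D, x ∈ B ∨ p x ∈ B) → Q B) (n : ℕ) :
    ∀ U B, #U = n → (∀ x ∈ D, x ∈ B ∨ p x ∈ B ∨ x ∈ U ∧ p x ∈ U) → BWin Q n true U B := by
  have hend : ∀ U B, #U ≤ 1 → (∀ x ∈ D, x ∈ B ∨ p x ∈ B ∨ x ∈ U ∧ p x ∈ U) → Q B :=
    fun U B hU hinv => hQ B fun x hx => (hinv x hx).imp_right fun h => h.resolve_right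
      fun ⟨hxU, hpxU⟩ => (hp x hx).2.1 (card_le_one.mp hU _ hpxU _ hxU)
  induction n using Nat.twoStepInduction with
  | zero => exact fun U B hU => hend U B (by omega)
  | one => exact fun U B hU hinv _ _ => hend U B hU.le hinv
  | more n ih _ =>
  intro U B hU hinv e he
  have hreply : ∃ e' ∈ U.erase e, e ∈ D → p e ∈ U.erase e → e' = p e := by
    by_cases h : e ∈ D ∧ p e ∈ U.erase e
    · exact ⟨p e, h.2, fun _ _ => rfl⟩
    obtain ⟨e', he'⟩ : (U.erase e).Nonempty := by
      rw [← card_pos, card_erase_of_mem he]; omega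
    exact ⟨e', he', fun h₁ h₂ => absurd ⟨h₁, h₂⟩ h⟩
  obtain ⟨e', he', hreply⟩ := hreply
  refine ⟨e', he', ih _ _ ?_ (hp.hit_or_free_erase_erase hinv hreply)⟩
  rw [card_erase_of_mem he', card_erase_of_mem he]; omega

theorem breakerWins_of_isPairingOn {X : Finset α} {F : Set (Finset α)} {p : α → α}
    {D : Finset α} (hp : IsPairingOn p D) (hDX : D ⊆ X)
    (hF : ∀ W ∈ F, ∃ x ∈ D, x ∈ W ∧ p x ∈ W) : BreakerWins X F := by
  refine bWin_of_isPairingOn hp (fun B hB W hW => ?_) _ X ∅ rfl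
    fun x hx => .inr (.inr ⟨hDX hx, hDX (hp x hx).1⟩)
  obtain ⟨x, hxD, hxW, hpxW⟩ := hF W hW
  exact (hB x hxD).elim (fun h => ⟨x, hxW, h⟩) (fun h => ⟨p x, hpxW, h⟩)

namespace SimpleGraph

variable {V : Type*} {T : SimpleGraph V}

lemma IsTree.eq_of_adj_of_dist_add_one_eq (hT : T.IsTree) {r u w₁ w₂ : V}
    (h₁ : T.Adj w₁ u) (h₂ : T.Adj w₂ u)
    (hd₁ : T.dist r w₁ + 1 = T.dist r u) (hd₂ : T.dist r w₂ + 1 = T.dist r u) : w₁ = w₂ := by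
  obtain ⟨q₁, hq₁⟩ := hT.connected.exists_walk_length_eq_dist r w₁
  obtain ⟨q₂, hq₂⟩ := hT.connected.exists_walk_length_eq_dist r w₂
  have hp₁ := (q₁.concat h₁).isPath_of_length_eq_dist (by rw [Walk.length_concat, hq₁, hd₁])
  have hp₂ := (q₂.concat h₂).isPath_of_length_eq_dist (by rw [Walk.length_concat, hq₂, hd₂])
  exact (Walk.concat_inj ((hT.existsUnique_path r u).unique hp₁ hp₂)).1

variable [Fintype V] [DecidableEq V] [DecidableRel T.Adj]

variable (T) in
open Classical in
/-- The edges from `u` to its children in `T` rooted at `r`. -/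
noncomputable def childEdges (r u : V) : Finset (Sym2 V) :=
  {e ∈ T.incidenceFinset u | ∀ w ∈ e, T.dist r u ≤ T.dist r w}

lemma childEdges_subset_incidenceFinset (r u : V) : T.childEdges r u ⊆ T.incidenceFinset u :=
  filter_subset _ _

lemma childEdges_self (r : V) : T.childEdges r r = T.incidenceFinset r :=
  filter_true_of_mem fun _ _ _ _ => by simp

lemma IsTree.pairwise_disjoint_childEdges (hT : T.IsTree) (r : V) :
    Pairwise (Disjoint on T.childEdges r) := by
  intro u v (huv : u ≠ v)
  refine Finset.disjoint_left.mpr fun e heu hev => ?_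
  simp only [childEdges, mem_filter, mem_incidenceFinset] at heu hev
  have he : e = s(u, v) := (Sym2.mem_and_mem_iff huv).mp ⟨heu.1.2, hev.1.2⟩
  have hadj : T.Adj u v := by rw [← mem_edgeSet, ← he]; exact heu.1.1
  exact hT.dist_ne_of_adj r hadj (le_antisymm (heu.2 v (he ▸ Sym2.mem_mk_right u v))
    (hev.2 u (he ▸ Sym2.mem_mk_left u v)))

lemma IsTree.card_incidenceFinset_sdiff_childEdges_le_one (hT : T.IsTree) (r u : V) :
    #(T.incidenceFinset u \ T.childEdges r u) ≤ 1 := by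
  have hparent : ∀ e ∈ T.incidenceFinset u \ T.childEdges r u,
      ∃ w, e = s(u, w) ∧ T.Adj w u ∧ T.dist r w + 1 = T.dist r u := by
    intro e he
    simp only [childEdges, mem_sdiff, mem_filter, mem_incidenceFinset, not_and] at he
    obtain ⟨w, rfl⟩ := Sym2.mem_iff_exists.mp he.1.2
    have hadj : T.Adj u w := he.1.1
    have hlt : T.dist r w < T.dist r u := by simpa [Sym2.forall_mem_pair] using he.2 he.1
    refine ⟨w, rfl, hadj.symm, ?_⟩
    have := hT.dist_eq_dist_add_one_of_adj r hadj
    omega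
  refine card_le_one.mpr fun e₁ he₁ e₂ he₂ => ?_
  obtain ⟨w₁, rfl, h₁, hd₁⟩ := hparent e₁ he₁
  obtain ⟨w₂, rfl, h₂, hd₂⟩ := hparent e₂ he₂
  rw [hT.eq_of_adj_of_dist_add_one_eq h₁ h₂ hd₁ hd₂]

end SimpleGraph

/-- If `T` is a tree with maximum degree at most `2ℓ - 2` in which at most one vertex has
degree exactly `2ℓ - 2`, then Breaker wins the `K_{1,ℓ}`-game on `T`. -/
theorem stmt5 {V : Type*} [Fintype V] [DecidableEq V]
    (T : SimpleGraph V) [DecidableRel T.Adj] (hT : T.IsTree) (ℓ : ℕ) (hℓ : 1 ≤ ℓ)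
    (hmax : ∀ v : V, T.degree v ≤ 2 * ℓ - 2)
    (huniq : ∀ u v : V, T.degree u = 2 * ℓ - 2 → T.degree v = 2 * ℓ - 2 → u = v) :
    BreakerWins T.edgeFinset (starSets T ℓ) := by
  have := hT.connected.nonempty
  obtain ⟨r, -, hr⟩ := exists_max_image univ (T.degree ·) univ_nonempty
  obtain ⟨p, D, hDc, hp, hblocks⟩ :=
    exists_isPairingOn_of_pairwise_disjoint (hT.pairwise_disjoint_childEdges r) univ
  have hDE : D ⊆ T.edgeFinset := hDc.trans <| biUnion_subset.mpr fun u _ =>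
    (childEdges_subset_incidenceFinset r u).trans (incidenceFinset_subset T u)
  refine breakerWins_of_isPairingOn hp hDE ?_
  rintro W ⟨hWE, hWcard, u, hu⟩
  by_contra! hW
  have hWu : W ⊆ T.incidenceFinset u := fun e he =>
    (mem_incidenceFinset T u e).mpr ⟨hWE e he, hu e he⟩
  have hcount := two_mul_card_le_of_isPairingOn hp hW (childEdges_subset_incidenceFinset r u) hWu
    (hblocks u (mem_univ u)).1 (hblocks u (mem_univ u)).2
  rw [card_incidenceFinset_eq_degree] at hcount
  have hslack : T.degree u + #(T.incidenceFinset u \ T.childEdges r u) ≤ 2 * ℓ - 2 := by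
    by_cases hur : u = r
    · subst hur
      simpa [childEdges_self] using hmax u
    · have hdeg : T.degree u ≠ 2 * ℓ - 2 := fun h =>
        hur (huniq u r h (le_antisymm (hmax r) (h ▸ hr u (mem_univ u))))
      have := hT.card_incidenceFinset_sdiff_childEdges_le_one r u
      have := hmax u
      omega
  omega
end

section
/- Let T be a tree and ℓ ≥ 1. Maker has a winning strategy in the K_{1,ℓ}-game on T if and only if there exists a (nonempty, connected) subtree T' of T such that every vertex x of T' satisfies deg_T(x) ≥ 2ℓ − 1 − deg_{T'}(x), where deg_{T'}(x) is the degree of x within T'. -/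
/-!
Maker: list the vertices of `S` so that each has exactly one neighbour `w` among the later
ones. Maker claims the edge `zw` at the first vertex `z`. If Breaker answers at `z`, then `w`
has gained a Maker edge in exchange for losing its neighbour `z`, and Maker goes on with the
rest of `S`; otherwise Maker is a move ahead at `z` and the inequality at `z` lets her complete
a star there.

Breaker: if no subtree satisfies the inequality, no nonempty vertex set does (pass to a
component), so the vertices can be deleted one by one, each with `deg x` plus its number of
remaining neighbours below `2ℓ - 1`. Orienting every edge towards its endpoint deleted later
gives `deg x + outdeg x < 2ℓ - 1` at every vertex. Breaker answers each Maker edge by an edge at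
its head; then at every vertex Maker's edges headed there exceed Breaker's edges there by at
most one, and her remaining edges there number at most the out-degree, so she never gets `ℓ`
edges at a vertex.
-/

open Finset

variable {α : Type*} [DecidableEq α]

open SimpleGraph

theorem MWin.not_bwin {F : Set (Finset α)} {n : ℕ} {b : Bool} {U M B : Finset α}
    (hMB : Disjoint M B) (hUM : Disjoint U M) (hUB : Disjoint U B)
    (hM : MWin (fun M => ∃ W ∈ F, W ⊆ M) n b U M) :
    ¬ BWin (fun B => ∀ W ∈ F, ∃ e ∈ W, e ∈ B) n b U B := by
  induction n generalizing b U M B with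
  | zero =>
    obtain ⟨W, hWF, hWM⟩ := hM
    intro hB
    obtain ⟨e, heW, heB⟩ := hB W hWF
    exact disjoint_left.1 hMB (hWM heW) heB
  | succ n ih =>
    cases b with
    | true =>
      obtain ⟨e, heU, hM⟩ := hM
      exact fun hB => ih (disjoint_insert_left.2 ⟨disjoint_left.1 hUB heU, hMB⟩)
        ((disjoint_insert_erase (disjoint_left.1 hUM heU)).2 hUM)
        (hUB.mono_left (erase_subset e U)) hM (hB e heU)
    | false =>
      rintro ⟨e, heU, hB⟩
      exact ih (disjoint_insert_right.2 ⟨disjoint_left.1 hUM heU, hMB⟩)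
        (hUM.mono_left (erase_subset e U))
        ((disjoint_insert_erase (disjoint_left.1 hUB heU)).2 hUB) (hM e heU) hB

theorem MakerWins.not_breakerWins {X : Finset α} {F : Set (Finset α)} (h : MakerWins X F) :
    ¬ BreakerWins X F :=
  MWin.not_bwin (disjoint_empty_left _) (disjoint_empty_right _) (disjoint_empty_right _) h

theorem mwin_card_of_move {P : Finset α → Prop} {U M : Finset α} {e : α} (he : e ∈ U)
    (hlast : U.erase e = ∅ → P (insert e M))
    (hnext : ∀ f ∈ U.erase e,
      MWin P #((U.erase e).erase f) true ((U.erase e).erase f) (insert e M)) :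
    MWin P #U true U M := by
  rw [← card_erase_add_one he]
  refine ⟨e, he, ?_⟩
  rcases h : #(U.erase e) with _ | k
  · exact hlast (card_eq_zero.1 h)
  · intro f hf
    have hk : #((U.erase e).erase f) = k := by rw [card_erase_of_mem hf, h]; rfl
    exact hk ▸ hnext f hf

theorem bwin_card_of_replies {Q : Finset α → Prop} {U B : Finset α}
    (hempty : U = ∅ → Q B)
    (hreply : ∀ e ∈ U, U.erase e = ∅ ∧ Q B ∨ ∃ f ∈ U.erase e,
      BWin Q #((U.erase e).erase f) true ((U.erase e).erase f) (insert f B)) :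
    BWin Q #U true U B := by
  rcases U.eq_empty_or_nonempty with rfl | ⟨e₀, he₀⟩
  · exact hempty rfl
  rw [← card_erase_add_one he₀]
  intro e he
  have hcard : #(U.erase e₀) = #(U.erase e) := by
    rw [card_erase_of_mem he₀, card_erase_of_mem he]
  rw [hcard]
  rcases hreply e he with ⟨hlast, hQ⟩ | ⟨f, hf, hB⟩
  · rw [hlast]; exact hQ
  · rw [← card_erase_add_one hf]
    exact ⟨f, hf, hB⟩

theorem subset_union_insert_union {E U M B U' B' : Finset α} {e : α}
    (h : E ⊆ U ∪ M ∪ B) (hU : U.erase e ⊆ U' ∪ B') (hB : B ⊆ B') :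
    E ⊆ U' ∪ insert e M ∪ B' := by
  intro g hg
  rcases eq_or_ne g e with rfl | hge
  · simp
  rcases mem_union.1 (h hg) with hg | hgB
  · rcases mem_union.1 hg with hgU | hgM
    · rcases mem_union.1 (hU (mem_erase.2 ⟨hge, hgU⟩)) with h' | h' <;> simp [h']
    · simp [hgM]
  · simp [hB hgB]

section EdgeDegree

variable {V : Type*} [DecidableEq V]

def degreeIn (F : Finset (Sym2 V)) (x : V) : ℕ := #{e ∈ F | x ∈ e}

@[simp] theorem degreeIn_empty (x : V) : degreeIn ∅ x = 0 := by simp [degreeIn]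

theorem degreeIn_mono {F F' : Finset (Sym2 V)} (h : F ⊆ F') (x : V) :
    degreeIn F x ≤ degreeIn F' x :=
  card_le_card (filter_subset_filter _ h)

theorem degreeIn_insert {F : Finset (Sym2 V)} {e : Sym2 V} (he : e ∉ F) (x : V) :
    degreeIn (insert e F) x = degreeIn F x + if x ∈ e then 1 else 0 := by
  unfold degreeIn
  rw [filter_insert]
  split_ifs
  · exact card_insert_of_notMem fun h => he (mem_filter.1 h).1
  · rfl

theorem degreeIn_erase {F : Finset (Sym2 V)} {e : Sym2 V} (he : e ∈ F) (x : V) :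
    degreeIn F x = degreeIn (F.erase e) x + if x ∈ e then 1 else 0 := by
  rw [← degreeIn_insert (notMem_erase e F), insert_erase he]

theorem degreeIn_pos_iff {F : Finset (Sym2 V)} {x : V} :
    0 < degreeIn F x ↔ ∃ e ∈ F, x ∈ e := by
  simp [degreeIn, card_pos, filter_nonempty_iff]

variable [Fintype V] {T : SimpleGraph V} [DecidableRel T.Adj]

theorem degreeIn_edgeFinset (x : V) : degreeIn T.edgeFinset x = T.degree x := by
  rw [degreeIn, ← incidenceFinset_eq_filter, card_incidenceFinset_eq_degree]

theorem exists_star_subset {ℓ : ℕ} {M : Finset (Sym2 V)} (hM : M ⊆ T.edgeFinset) {x : V}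
    (h : ℓ ≤ degreeIn M x) : ∃ W ∈ starSets T ℓ, W ⊆ M := by
  obtain ⟨W, hWx, rfl⟩ := exists_subset_card_eq h
  refine ⟨W, ⟨fun e he => ?_, rfl, x, fun e he => (mem_filter.1 (hWx he)).2⟩,
    hWx.trans (filter_subset _ _)⟩
  exact mem_edgeFinset.1 (hM (mem_filter.1 (hWx he)).1)

end EdgeDegree

namespace SimpleGraph

variable {V : Type*} {T : SimpleGraph V}

theorem induce_insert_connected {S : Set V} (hS : (T.induce S).Connected) {x y : V} (hx : x ∈ S)
    (hxy : T.Adj x y) : (T.induce (insert y S)).Connected := by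
  have h := induce_union_connected hS.preconnected (induce_pair_connected_of_adj hxy).preconnected
    ⟨x, hx, Set.mem_insert x {y}⟩
  rwa [Set.union_insert, Set.union_singleton,
    Set.insert_eq_of_mem (Set.mem_insert_of_mem y hx)] at h

/-- The edge `yb` is a bridge, but `y b' ⋯ b` joins its ends through `A`. -/
theorem IsAcyclic.eq_of_adj_of_adj {A : Set V} (hT : T.IsAcyclic) (hA : (T.induce A).Preconnected)
    {y b b' : V} (hy : y ∉ A) (hb : b ∈ A) (hb' : b' ∈ A) (h : T.Adj y b) (h' : T.Adj y b') :
    b = b' := by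
  by_contra hne
  have hbridge := isBridge_iff.1 (isAcyclic_iff_forall_adj_isBridge.1 hT h)
  let f : T.induce A →g T.deleteEdges {s(y, b)} :=
    ⟨Subtype.val, fun {u v} huv => by
      refine (deleteEdges_adj ..).2 ⟨huv, fun h => hy ?_⟩
      rcases Sym2.eq_iff.1 (Set.mem_singleton_iff.1 h) with ⟨rfl, -⟩ | ⟨-, rfl⟩
      exacts [u.2, v.2]⟩
  have hyb' : (T.deleteEdges {s(y, b)}).Adj y b' :=
    (deleteEdges_adj ..).2 ⟨h', fun h => hne (Sym2.congr_right.1 h).symm⟩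
  exact hbridge (hyb'.reachable.trans ((hA ⟨b', hb'⟩ ⟨b, hb⟩).map f))

theorem exists_adj_of_ssubset {S A : Finset V} (hS : (T.induce (S : Set V)).Preconnected)
    (hA : A.Nonempty) (hAS : A ⊂ S) : ∃ b ∈ A, ∃ y ∈ S, y ∉ A ∧ T.Adj b y := by
  obtain ⟨a, ha⟩ := hA
  obtain ⟨s, hsS, hsA⟩ := exists_of_ssubset hAS
  obtain ⟨p⟩ := hS ⟨a, hAS.subset ha⟩ ⟨s, hsS⟩
  obtain ⟨d, -, hd₁, hd₂⟩ := p.exists_boundary_dart {v | v.1 ∈ A} ha hsA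
  exact ⟨d.fst, hd₁, d.snd, d.snd.2, hd₂, d.adj⟩

variable [DecidableEq V]

variable (T) in
inductive LeafBuilt : Finset V → Prop
  | singleton (x : V) : LeafBuilt {x}
  | insert {S : Finset V} {z w : V} : LeafBuilt S → z ∉ S → w ∈ S → T.Adj z w →
      (∀ y ∈ S, T.Adj z y → y = w) → LeafBuilt (insert z S)

theorem LeafBuilt.connected {S : Finset V} (h : T.LeafBuilt S) :
    (T.induce (S : Set V)).Connected := by
  induction h with
  | singleton x => rw [coe_singleton, induce_singleton_eq_top]; exact connected_top
  | insert _ _ hwS hzw _ ih => rw [coe_insert]; exact induce_insert_connected ih hwS hzw.symm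

theorem leafBuilt_of_connected (hT : T.IsAcyclic) {S : Finset V}
    (hS : (T.induce (S : Set V)).Connected) : T.LeafBuilt S := by
  obtain ⟨⟨x, hx⟩⟩ := hS.nonempty
  refine strongDownwardInduction (n := #S)
    (p := fun A => A ⊆ S → T.LeafBuilt A → T.LeafBuilt S) (fun A ih _ hAS hA => ?_)
    {x} (card_le_card (by simpa using hx)) (by simpa using hx) (.singleton x)
  rcases hAS.eq_or_ssubset with rfl | hAS
  · exact hA
  obtain ⟨⟨a, ha⟩⟩ := hA.connected.nonempty
  obtain ⟨b, hb, y, hyS, hyA, hby⟩ := exists_adj_of_ssubset hS.preconnected ⟨a, ha⟩ hAS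
  have hyAS : insert y A ⊆ S := insert_subset hyS hAS.subset
  exact ih (card_le_card hyAS) (ssubset_insert hyA) hyAS <| .insert hA hyA hb hby.symm
    fun b' hb' h' => hT.eq_of_adj_of_adj hA.connected.preconnected hyA hb' hb h' hby.symm

theorem exists_connected_subset_forall_adj_mem {A : Finset V} (hA : A.Nonempty) :
    ∃ S ⊆ A, (T.induce (S : Set V)).Connected ∧
      ∀ x ∈ S, ∀ y ∈ A, T.Adj x y → y ∈ S := by
  classical
  obtain ⟨x, hx⟩ := hA
  obtain ⟨S, hS⟩ := exists_maximal
    (s := A.powerset.filter fun S : Finset V => (T.induce (S : Set V)).Connected)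
    ⟨{x}, mem_filter.2 ⟨by simpa using hx, LeafBuilt.connected (.singleton x)⟩⟩
  obtain ⟨hSA, hSconn⟩ := by simpa using hS.1
  refine ⟨S, hSA, hSconn, fun x hx y hy hxy =>
    hS.2 ?_ (subset_insert y S) (mem_insert_self y S)⟩
  refine mem_filter.2 ⟨mem_powerset.2 (insert_subset hy hSA), ?_⟩
  rw [coe_insert]
  exact induce_insert_connected hSconn hx hxy

variable [DecidableRel T.Adj]

theorem exists_lt_of_forall_connected (d : V → ℕ) (k : ℕ)
    (h : ∀ S : Finset V, S.Nonempty → (T.induce (S : Set V)).Connected →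
      ∃ x ∈ S, d x + #{y ∈ S | T.Adj x y} < k)
    {A : Finset V} (hA : A.Nonempty) : ∃ x ∈ A, d x + #{y ∈ A | T.Adj x y} < k := by
  obtain ⟨S, hSA, hconn, hclosed⟩ := exists_connected_subset_forall_adj_mem hA
  obtain ⟨⟨x, hx⟩⟩ := hconn.nonempty
  obtain ⟨y, hy, hlt⟩ := h S ⟨x, hx⟩ hconn
  refine ⟨y, hSA hy, lt_of_le_of_lt (Nat.add_le_add_left (card_le_card fun z hz => ?_) _) hlt⟩
  obtain ⟨hzA, hyz⟩ := mem_filter.1 hz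
  exact mem_filter.2 ⟨hclosed y hy z hzA hyz, hyz⟩

variable [Fintype V]

theorem card_filter_incidenceFinset (p : Sym2 V → Prop) [DecidablePred p] (x : V) :
    #{e ∈ T.incidenceFinset x | p e} = #{y ∈ T.neighborFinset x | p s(x, y)} := by
  symm
  refine card_nbij (s(x, ·)) (fun y hy => ?_) (fun y _ y' _ h => Sym2.congr_right.1 h) ?_
  · obtain ⟨hxy, hpy⟩ := mem_filter.1 hy
    exact mem_filter.2 ⟨(mem_incidenceFinset ..).2 ((mem_incidenceSet ..).2
      ((mem_neighborFinset ..).1 hxy)), hpy⟩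
  · intro e he
    obtain ⟨he, hpe⟩ := mem_filter.1 he
    obtain ⟨y, rfl⟩ : ∃ y, s(x, y) = e :=
      ⟨_, Sym2.other_spec' ((mem_incidenceFinset ..).1 he).2⟩
    exact ⟨y, mem_filter.2 ⟨by simpa using he, hpe⟩, rfl⟩

/-- `c e` is the head of the edge `e`: delete the vertices one at a time, each time one with
`d x + (number of remaining neighbours) < k`, and orient every edge towards its endpoint
deleted later. -/
theorem exists_orientation (d : V → ℕ) (k : ℕ)
    (h : ∀ A : Finset V, A.Nonempty → ∃ x ∈ A, d x + #{y ∈ A | T.Adj x y} < k) :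
    ∃ c : Sym2 V → V, (∀ e, c e ∈ e) ∧
      ∀ x, d x + #{e ∈ T.incidenceFinset x | c e ≠ x} < k := by
  suffices ∀ A : Finset V, ∃ c : Sym2 V → V, (∀ e, c e ∈ e) ∧
      ∀ x ∈ A, d x + #{y ∈ A | T.Adj x y ∧ c s(x, y) ≠ x} < k by
    obtain ⟨c, hc, hout⟩ := this univ
    refine ⟨c, hc, fun x => ?_⟩
    rw [card_filter_incidenceFinset, neighborFinset_eq_filter, filter_filter]
    exact hout x (mem_univ x)
  intro A
  induction A using Finset.strongInduction with
  | H A ih =>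
  rcases A.eq_empty_or_nonempty with rfl | hA
  · exact ⟨fun e => e.out.1, Sym2.out_fst_mem, by simp⟩
  obtain ⟨x₀, hx₀, hx₀k⟩ := h A hA
  obtain ⟨c, hc, hout⟩ := ih (A.erase x₀) (erase_ssubset hx₀)
  refine ⟨fun e => if h : x₀ ∈ e then Sym2.Mem.other' h else c e,
    fun e => by dsimp only; split_ifs; exacts [Sym2.other_mem' _, hc e], fun x hx => ?_⟩
  rcases eq_or_ne x x₀ with rfl | hne
  · exact lt_of_le_of_lt (Nat.add_le_add_left (card_le_card (monotone_filter_right _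
      fun _ _ h => h.1)) _) hx₀k
  refine lt_of_le_of_lt (Nat.add_le_add_left (card_le_card fun y hy => ?_) _)
    (hout x (mem_erase.2 ⟨hne, hx⟩))
  obtain ⟨hyA, hxy, hcy⟩ := mem_filter.1 hy
  dsimp only at hcy
  rcases eq_or_ne y x₀ with rfl | hy₀
  · refine absurd ?_ hcy
    rw [dif_pos (Sym2.mem_mk_right x y)]
    exact Sym2.congr_right.1 ((Sym2.other_spec' _).trans Sym2.eq_swap)
  · have hx₀xy : x₀ ∉ s(x, y) := by simp [Sym2.mem_iff, hne.symm, hy₀.symm]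
    rw [dif_neg hx₀xy] at hcy
    exact mem_filter.2 ⟨mem_erase.2 ⟨hy₀, hyA⟩, hxy, hcy⟩

end SimpleGraph

section Maker

variable {V : Type*} [Fintype V] [DecidableEq V] {T : SimpleGraph V} [DecidableRel T.Adj]
  {ℓ : ℕ}

/-- Maker keeps claiming edges at `x` while there are free ones: each round raises
`2 · (her edges at x) + (free edges at x)` by one and Breaker's reply lowers it by at most one,
so when no free edge is left at `x` she holds `ℓ` of them. -/
theorem mwin_of_star_potential (x : V) {U M : Finset (Sym2 V)} (hUM : Disjoint U M)
    (hUE : U ⊆ T.edgeFinset) (hME : M ⊆ T.edgeFinset)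
    (hval : 2 * ℓ ≤ 2 * degreeIn M x + degreeIn U x + 1) :
    MWin (fun M => ∃ W ∈ starSets T ℓ, W ⊆ M) #U true U M := by
  induction U using Finset.strongInduction generalizing M with
  | H U ih =>
  rcases U.eq_empty_or_nonempty with rfl | ⟨e₀, he₀⟩
  · rw [degreeIn_empty] at hval
    exact exists_star_subset hME (x := x) (by omega)
  obtain ⟨e, he, hxe⟩ : ∃ e ∈ U, x ∈ e ∨ degreeIn U x = 0 := by
    by_cases h0 : degreeIn U x = 0
    · exact ⟨e₀, he₀, .inr h0⟩
    · obtain ⟨e, he, hxe⟩ := degreeIn_pos_iff.1 (Nat.pos_of_ne_zero h0)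
      exact ⟨e, he, .inl hxe⟩
  have heM : e ∉ M := disjoint_left.1 hUM he
  have hME' : insert e M ⊆ T.edgeFinset := insert_subset (hUE he) hME
  have hM' := degreeIn_insert heM x
  have hU' := degreeIn_erase he x
  apply mwin_card_of_move he
  · intro hlast
    rw [hlast, degreeIn_empty] at hU'
    exact exists_star_subset hME' (x := x) (by grind)
  · intro f hf
    have hU'' := degreeIn_erase hf x
    refine ih _ ((erase_subset f _).trans_ssubset (erase_ssubset he))
      (((disjoint_insert_erase heM).2 hUM).mono_left (erase_subset f _))
      ((erase_subset _ _).trans ((erase_subset _ _).trans hUE)) hME' ?_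
    grind

theorem mwin_of_leafBuilt {S : Finset V} (hS : T.LeafBuilt S) {U M : Finset (Sym2 V)}
    (hUM : Disjoint U M) (hUE : U ⊆ T.edgeFinset) (hME : M ⊆ T.edgeFinset)
    (hSU : ∀ x ∈ S, ∀ y ∈ S, T.Adj x y → s(x, y) ∈ U)
    (hval : ∀ x ∈ S, 2 * ℓ ≤ 2 * degreeIn M x + degreeIn U x + #{y ∈ S | T.Adj x y} + 1) :
    MWin (fun M => ∃ W ∈ starSets T ℓ, W ⊆ M) #U true U M := by
  induction hS generalizing U M with
  | singleton x =>
    exact mwin_of_star_potential x hUM hUE hME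
      (by simpa [filter_singleton] using hval x (mem_singleton_self x))
  | @insert S z w hS hzS hwS hzw hw ih =>
  have he : s(z, w) ∈ U := hSU z (mem_insert_self z S) w (mem_insert_of_mem hwS) hzw
  have heM : s(z, w) ∉ M := disjoint_left.1 hUM he
  have hME' : insert s(z, w) M ⊆ T.edgeFinset := insert_subset (hUE he) hME
  have hzS' : #{y ∈ insert z S | T.Adj z y} = 1 := by
    rw [filter_insert, if_neg T.irrefl, card_eq_one]
    exact ⟨w, by ext y; simp only [mem_filter, mem_singleton]; grind⟩
  have hz := hval z (mem_insert_self z S)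
  have hzM := degreeIn_insert heM z
  have hzU := degreeIn_erase he z
  simp only [Sym2.mem_mk_left, if_true, hzS'] at hz hzM hzU
  apply mwin_card_of_move he
  · intro hlast
    rw [hlast, degreeIn_empty] at hzU
    exact exists_star_subset hME' (x := z) (by omega)
  intro f hf
  have hfU := mem_of_mem_erase hf
  have hUE' : (U.erase s(z, w)).erase f ⊆ T.edgeFinset :=
    (erase_subset _ _).trans ((erase_subset _ _).trans hUE)
  have hUM' : Disjoint ((U.erase s(z, w)).erase f) (insert s(z, w) M) :=
    ((disjoint_insert_erase heM).2 hUM).mono_left (erase_subset f _)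
  by_cases hzf : z ∈ f
  · -- Breaker answered at `z`: the rest of the play takes place on `S`.
    have hSf : ∀ x ∈ S, x ∉ f := by
      intro x hx hxf
      have hxz : x ≠ z := fun h => hzS (h ▸ hx)
      have hf' : f = s(z, x) := (Sym2.mem_and_mem_iff hxz.symm).1 ⟨hzf, hxf⟩
      have hzx : T.Adj z x := by simpa [hf'] using hUE hfU
      exact ne_of_mem_erase hf (by rw [hf', hw x hx hzx])
    refine ih hUM' hUE' hME' (fun x hx y hy hxy => ?_) (fun x hx => ?_)
    · have hzxy : z ∉ s(x, y) := by
        simp only [Sym2.mem_iff, not_or]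
        exact ⟨fun h => hzS (h ▸ hx), fun h => hzS (h ▸ hy)⟩
      refine mem_erase.2 ⟨fun h => hzxy (h ▸ hzf), mem_erase.2 ⟨fun h => ?_, ?_⟩⟩
      · exact hzxy (h ▸ Sym2.mem_mk_left z w)
      · exact hSU x (mem_insert_of_mem hx) y (mem_insert_of_mem hy) hxy
    · have hxM := degreeIn_insert heM x
      have hxU := degreeIn_erase he x
      have hxU' := degreeIn_erase hf x
      have hxS := hval x (mem_insert_of_mem hx)
      have hxz : x ≠ z := fun h => hzS (h ▸ hx)
      have hxw : T.Adj x z ↔ x = w := ⟨fun h => hw x hx h.symm, fun h => h ▸ hzw.symm⟩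
      rw [filter_insert, apply_ite card, card_insert_of_notMem (by simp [hzS])] at hxS
      simp only [hSf x hx, Sym2.mem_iff, hxz, false_or, if_false, hxw, add_zero] at hxM hxU hxU' hxS
      split_ifs at hxM hxU hxS <;> omega
  · -- Breaker answered away from `z`: Maker is now a move ahead at `z`.
    have hzU' := degreeIn_erase hf z
    simp only [hzf, if_false] at hzU'
    exact mwin_of_star_potential z hUM' hUE' hME' (by omega)

theorem makerWins_of_leafBuilt {S : Finset V} (hS : T.LeafBuilt S)
    (hdeg : ∀ x ∈ S, 2 * ℓ - 1 ≤ T.degree x + #{y ∈ S | T.Adj x y}) :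
    MakerWins T.edgeFinset (starSets T ℓ) :=
  mwin_of_leafBuilt hS (disjoint_empty_right _) subset_rfl (empty_subset _)
    (fun _ _ _ _ h => mem_edgeFinset.2 h)
    (fun x hx => by have := hdeg x hx; rw [degreeIn_edgeFinset, degreeIn_empty]; omega)

end Maker

section Breaker

variable {V : Type*} [DecidableEq V] (c : Sym2 V → V)

/-- Breaker's invariant for the strategy that answers each Maker edge `e` by an edge at its
head `c e`. -/
def HeadBalanced (U B M : Finset (Sym2 V)) : Prop :=
  ∀ x, #{e ∈ M | c e = x} ≤ degreeIn B x + if degreeIn U x = 0 then 1 else 0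

variable {c}

theorem HeadBalanced.round {U B M U' B' : Finset (Sym2 V)} {e : Sym2 V}
    (h : HeadBalanced c U B M) (he : e ∈ U) (hce : c e ∈ e) (hU' : U' ⊆ U.erase e)
    (hB' : B ⊆ B') (hreply : (∃ g ∈ U', c e ∈ g) → ∃ f ∈ B', f ∉ B ∧ c e ∈ f) :
    HeadBalanced c U' B' (insert e M) := by
  intro x
  have hM : #{g ∈ insert e M | c g = x} ≤ #{g ∈ M | c g = x} + if c e = x then 1 else 0 := by
    rw [filter_insert]
    split_ifs
    exacts [card_insert_le _ _, Nat.le_refl _]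
  have hBx := degreeIn_mono hB' x
  have hUx := degreeIn_erase he x
  have hU'x := degreeIn_mono hU' x
  have hx := h x
  by_cases hex : c e = x
  · subst hex
    by_cases hfree : degreeIn U' (c e) = 0
    · simp only [hce, hfree, if_true] at hM hUx ⊢
      split_ifs at hx <;> omega
    · obtain ⟨f, hfB', hfB, hef⟩ := hreply (degreeIn_pos_iff.1 (Nat.pos_of_ne_zero hfree))
      have hBf := degreeIn_insert hfB (c e)
      have hBf' := degreeIn_mono (insert_subset hfB' hB') (c e)
      simp only [hce, hfree, hef, if_true, if_false] at hM hUx hBf ⊢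
      split_ifs at hx <;> omega
  · simp only [hex, if_false] at hM
    split_ifs at hx ⊢ <;> omega

variable [Fintype V] {T : SimpleGraph V} [DecidableRel T.Adj] {ℓ : ℕ}

theorem HeadBalanced.exists_mem_of_mem_starSets {B M : Finset (Sym2 V)}
    (h : HeadBalanced c ∅ B M)
    (hout : ∀ x, T.degree x + #{e ∈ T.incidenceFinset x | c e ≠ x} < 2 * ℓ - 1)
    (hBE : B ⊆ T.edgeFinset) (hcover : T.edgeFinset ⊆ M ∪ B) :
    ∀ W ∈ starSets T ℓ, ∃ e ∈ W, e ∈ B := by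
  rintro W ⟨hWE, rfl, v, hv⟩
  by_contra! hWB
  have hWv : W ⊆ T.incidenceFinset v := fun e he =>
    (mem_incidenceFinset ..).2 ⟨hWE e he, hv e he⟩
  have hWM : W ⊆ M := fun e he =>
    (mem_union.1 (hcover (mem_edgeFinset.2 (hWE e he)))).resolve_right (hWB e he)
  have hown : #{e ∈ W | c e = v} ≤ #{e ∈ M | c e = v} :=
    card_le_card (filter_subset_filter _ hWM)
  have hother : #{e ∈ W | c e ≠ v} ≤ #{e ∈ T.incidenceFinset v | c e ≠ v} :=
    card_le_card (filter_subset_filter _ hWv)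
  have hsplit : #{e ∈ W | c e = v} + #{e ∈ W | c e ≠ v} = #W :=
    card_filter_add_card_filter_not _
  have hdeg : #W + degreeIn B v ≤ T.degree v := by
    rw [← card_incidenceFinset_eq_degree, degreeIn, ← card_union_of_disjoint
      (disjoint_left.2 fun e he he' => hWB e he (mem_filter.1 he').1)]
    refine card_le_card (union_subset hWv fun e he => ?_)
    obtain ⟨heB, hve⟩ := mem_filter.1 he
    exact (mem_incidenceFinset ..).2 ⟨mem_edgeFinset.1 (hBE heB), hve⟩
  have hbal := h v
  simp only [degreeIn_empty, if_true] at hbal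
  have := hout v
  omega

theorem breakerWins_of_orientation (hc : ∀ e, c e ∈ e)
    (hout : ∀ x, T.degree x + #{e ∈ T.incidenceFinset x | c e ≠ x} < 2 * ℓ - 1) :
    BreakerWins T.edgeFinset (starSets T ℓ) := by
  suffices ∀ U B M : Finset (Sym2 V), U ⊆ T.edgeFinset → B ⊆ T.edgeFinset →
      Disjoint U B → T.edgeFinset ⊆ U ∪ M ∪ B → HeadBalanced c U B M →
      BWin (fun B => ∀ W ∈ starSets T ℓ, ∃ e ∈ W, e ∈ B) #U true U B from
    this _ ∅ ∅ subset_rfl (empty_subset _) (disjoint_empty_right _) (by simp)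
      fun x => by simp [degreeIn]
  intro U
  induction U using Finset.strongInduction with
  | H U ih =>
  intro B M hUE hBE hUB hcover h
  apply bwin_card_of_replies
  · rintro rfl
    exact h.exists_mem_of_mem_starSets hout hBE (by simpa using hcover)
  intro e he
  by_cases hlast : U.erase e = ∅
  · have h' := h.round he (hc e) subset_rfl subset_rfl (by simp [hlast])
    rw [hlast] at h'
    exact .inl ⟨hlast, h'.exists_mem_of_mem_starSets hout hBE
      (by simpa using
        subset_union_insert_union (U' := ∅) hcover (by simp [hlast]) subset_rfl)⟩
  obtain ⟨f, hf, hfe⟩ :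
      ∃ f ∈ U.erase e, (∃ g ∈ U.erase e, c e ∈ g) → c e ∈ f := by
    by_cases hg : ∃ g ∈ U.erase e, c e ∈ g
    · obtain ⟨g, hg, hcg⟩ := hg
      exact ⟨g, hg, fun _ => hcg⟩
    · obtain ⟨f, hf⟩ := nonempty_iff_ne_empty.2 hlast
      exact ⟨f, hf, fun h => (hg h).elim⟩
  have hfB : f ∉ B := disjoint_left.1 hUB (mem_of_mem_erase hf)
  refine .inr ⟨f, hf, ih _ ((erase_subset f _).trans_ssubset (erase_ssubset he)) (insert f B)
    (insert e M) ((erase_subset _ _).trans ((erase_subset _ _).trans hUE))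
    (insert_subset (hUE (mem_of_mem_erase hf)) hBE)
    ((disjoint_insert_erase hfB).2 (hUB.mono_left (erase_subset e U))) ?_ ?_⟩
  · refine subset_union_insert_union hcover (fun g hg => ?_) (subset_insert f B)
    rcases eq_or_ne g f with rfl | hgf
    · simp
    · exact mem_union_left _ (mem_erase.2 ⟨hgf, hg⟩)
  · exact h.round he (hc e) (erase_subset _ _) (subset_insert f B)
      fun hg => ⟨f, mem_insert_self f B, hfB, hfe (hg.imp fun g ⟨hg, hcg⟩ =>
        ⟨mem_of_mem_erase hg, hcg⟩)⟩

end Breaker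

theorem stmt6_general {V : Type*} [Fintype V] [DecidableEq V]
    (T : SimpleGraph V) [DecidableRel T.Adj] (hT : T.IsTree) (ℓ : ℕ) :
    MakerWins T.edgeFinset (starSets T ℓ) ↔
      ∃ S : Finset V, S.Nonempty ∧ (T.induce (S : Set V)).Connected ∧
        ∀ x ∈ S, 2 * ℓ - 1 ≤ T.degree x + (S.filter fun y => T.Adj x y).card := by
  constructor
  · intro hM
    by_contra! hS
    obtain ⟨c, hc, hout⟩ := T.exists_orientation (fun x => T.degree x) _
      fun A hA => T.exists_lt_of_forall_connected _ _ hS hA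
    exact hM.not_breakerWins (breakerWins_of_orientation hc hout)
  · rintro ⟨S, -, hconn, hdeg⟩
    exact makerWins_of_leafBuilt (T.leafBuilt_of_connected hT.isAcyclic hconn) hdeg

/-- **Characterization of the `K_{1,ℓ}`-game on trees.** Maker wins the `K_{1,ℓ}`-game on a
tree `T` iff there is a nonempty connected subtree, given by its vertex set `S`, such that
every `x ∈ S` satisfies `deg_T(x) ≥ 2ℓ - 1 - deg_{T'}(x)`, i.e.
`deg_T(x) + deg_{T'}(x) ≥ 2ℓ - 1`, where `deg_{T'}(x)` is the number of neighbors of `x`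
inside `S`. -/
theorem stmt6 {V : Type*} [Fintype V] [DecidableEq V]
    (T : SimpleGraph V) [DecidableRel T.Adj] (hT : T.IsTree) (ℓ : ℕ) (hℓ : 1 ≤ ℓ) :
    MakerWins T.edgeFinset (starSets T ℓ) ↔
      ∃ S : Finset V, S.Nonempty ∧ (T.induce (S : Set V)).Connected ∧
        ∀ x ∈ S, 2 * ℓ - 1 ≤ T.degree x + (S.filter fun y => T.Adj x y).card :=
  stmt6_general T hT ℓ
end

section
/- If G is a bipartite graph with bipartition (A, B) such that every vertex of degree at least 3 lies in A (equivalently, every vertex of B has degree at most 2), then Breaker has a winning strategy in the P₄-game on G. -/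
open Finset

variable {α : Type*} [DecidableEq α]

open SimpleGraph

/-- Winning sets of the `P₄`-game on `G`: edge sets of paths of `G` on 4 distinct
vertices (3 edges). -/
def p4Sets {V : Type*} [DecidableEq V] (G : SimpleGraph V) : Set (Finset (Sym2 V)) :=
  {W | ∃ a b c d : V, a ≠ b ∧ a ≠ c ∧ a ≠ d ∧ b ≠ c ∧ b ≠ d ∧ c ≠ d ∧
    G.Adj a b ∧ G.Adj b c ∧ G.Adj c d ∧ W = {s(a, b), s(b, c), s(c, d)}}

/-!
Breaker plays a pairing strategy. The incidence sets of the degree-2 vertices outside `A` are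
pairwise disjoint, since two such vertices are never adjacent. Every `P₄` has two adjacent inner
vertices, so one of them lies outside `A`; it has degree exactly 2, and both of its edges lie
on the path. Whenever Maker claims an element of one of these blocks, Breaker claims another
element of the same block. So Breaker ends up owning an element of every block, and hence of
every winning set.
-/

open Finset SimpleGraph

section Pairing

variable {ι : Type*} {s : Set ι} {p : ι → Finset α}

/-- The invariant of Breaker's pairing strategy whenever Maker is to move. -/
def PairingRespected (s : Set ι) (p : ι → Finset α) (U B : Finset α) : Prop :=
  ∀ i ∈ s, p i ⊆ U ∨ ∃ b ∈ p i, b ∈ B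

omit [DecidableEq α] in
theorem PairingRespected.hits {F : Set (Finset α)} {U B : Finset α}
    (h : PairingRespected s p U B) (hp : ∀ i ∈ s, 1 < (p i).card)
    (hF : ∀ W ∈ F, ∃ i ∈ s, p i ⊆ W) (hU : U.card ≤ 1) :
    ∀ W ∈ F, ∃ e ∈ W, e ∈ B := by
  intro W hW
  obtain ⟨i, hi, hiW⟩ := hF W hW
  rcases h i hi with hiU | ⟨b, hb, hbB⟩
  · exact absurd ((card_le_card hiU).trans hU) (hp i hi).not_ge
  · exact ⟨b, hiW hb, hbB⟩

theorem PairingRespected.erase_erase_insert {U B : Finset α} {e e' : α}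
    (h : PairingRespected s p U B) (he' : ∀ i ∈ s, e ∈ p i → p i ⊆ U → e' ∈ p i) :
    PairingRespected s p ((U.erase e).erase e') (insert e' B) := by
  intro i hi
  rcases h i hi with hiU | ⟨b, hb, hbB⟩
  · by_cases he'i : e' ∈ p i
    · exact Or.inr ⟨e', he'i, mem_insert_self _ _⟩
    have hei : e ∉ p i := fun hei => he'i (he' i hi hei hiU)
    refine Or.inl fun x hx => ?_
    exact mem_erase.2 ⟨ne_of_mem_of_not_mem hx he'i,
      mem_erase.2 ⟨ne_of_mem_of_not_mem hx hei, hiU hx⟩⟩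
  · exact Or.inr ⟨b, hb, mem_insert_of_mem hbB⟩

/-- Breaker's reply to Maker claiming `e`: another element of the untouched block containing
`e`, if there is one, and an arbitrary unclaimed element otherwise. -/
theorem exists_pairing_reply (hs : s.PairwiseDisjoint p) (hp : ∀ i ∈ s, 1 < (p i).card)
    {U : Finset α} {e : α} (he : e ∈ U) (hU : 1 < U.card) :
    ∃ e' ∈ U.erase e, ∀ i ∈ s, e ∈ p i → p i ⊆ U → e' ∈ p i := by
  by_cases hblock : ∃ i ∈ s, e ∈ p i ∧ p i ⊆ U
  · obtain ⟨i, hi, hei, hiU⟩ := hblock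
    obtain ⟨x, hx, hxe⟩ := exists_mem_ne (hp i hi) e
    refine ⟨x, mem_erase.2 ⟨hxe, hiU hx⟩, fun j hj hej _ => ?_⟩
    rwa [← hs.elim_finset hi hj e hei hej]
  · obtain ⟨e', he'⟩ : (U.erase e).Nonempty := by
      rw [← card_pos, card_erase_of_mem he]
      omega
    exact ⟨e', he', fun i hi hei hiU => absurd ⟨i, hi, hei, hiU⟩ hblock⟩

theorem bWin_of_pairingRespected {F : Set (Finset α)} (hs : s.PairwiseDisjoint p)
    (hp : ∀ i ∈ s, 1 < (p i).card) (hF : ∀ W ∈ F, ∃ i ∈ s, p i ⊆ W) :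
    ∀ (n : ℕ) (U B : Finset α), U.card = n → PairingRespected s p U B →
      BWin (fun B => ∀ W ∈ F, ∃ e ∈ W, e ∈ B) n true U B
  | 0, _, _, hU, h => h.hits hp hF (by omega)
  | 1, _, _, hU, h => fun _ _ => h.hits hp hF hU.le
  | n + 2, U, B, hU, h => by
    intro e he
    obtain ⟨e', he', hreply⟩ := exists_pairing_reply hs hp he (by omega)
    refine ⟨e', he', bWin_of_pairingRespected hs hp hF n _ _ ?_ (h.erase_erase_insert hreply)⟩
    rw [card_erase_of_mem he', card_erase_of_mem he, hU]
    rfl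

theorem breakerWins_of_pairwiseDisjoint {X : Finset α} {F : Set (Finset α)}
    (hs : s.PairwiseDisjoint p) (hp : ∀ i ∈ s, 1 < (p i).card) (hX : ∀ i ∈ s, p i ⊆ X)
    (hF : ∀ W ∈ F, ∃ i ∈ s, p i ⊆ W) : BreakerWins X F :=
  bWin_of_pairingRespected hs hp hF _ X ∅ rfl fun i hi => Or.inl (hX i hi)

end Pairing

section Graph

variable {V : Type*} [Fintype V] [DecidableEq V] {G : SimpleGraph V} [DecidableRel G.Adj]

theorem incidenceFinset_eq_pair {v x y : V} (hv : G.degree v ≤ 2) (hx : G.Adj v x)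
    (hy : G.Adj v y) (hxy : x ≠ y) : G.incidenceFinset v = {s(v, x), s(v, y)} := by
  have hsub : {s(v, x), s(v, y)} ⊆ G.incidenceFinset v := by
    simp [insert_subset_iff, hx, hy]
  refine (eq_of_subset_of_card_le hsub ?_).symm
  rw [card_incidenceFinset_eq_degree, card_pair (Sym2.congr_right.not.2 hxy)]
  exact hv

theorem pairwiseDisjoint_incidenceFinset {A : Set V}
    (hbip : ∀ u v : V, G.Adj u v → (u ∈ A ↔ v ∉ A)) :
    {v | v ∉ A ∧ G.degree v = 2}.PairwiseDisjoint (G.incidenceFinset ·) := by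
  intro v hv w hw hvw
  rw [Function.onFun, Finset.disjoint_left]
  intro e hev hew
  rw [mem_incidenceFinset] at hev hew
  exact hv.1 ((hbip v w (G.adj_of_mem_incidenceSet hvw hev hew)).2 hw.1)

theorem exists_incidenceFinset_subset_of_mem_p4Sets {A : Set V}
    (hbip : ∀ u v : V, G.Adj u v → (u ∈ A ↔ v ∉ A)) (hdeg : ∀ v : V, v ∉ A → G.degree v ≤ 2)
    {W : Finset (Sym2 V)} (hW : W ∈ p4Sets G) :
    ∃ v ∈ {v | v ∉ A ∧ G.degree v = 2}, G.incidenceFinset v ⊆ W := by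
  obtain ⟨a, b, c, d, hab, hac, -, hbc, hbd, -, Hab, Hbc, Hcd, rfl⟩ := hW
  have inner_vertex {v x y : V} (hvA : v ∉ A) (hx : G.Adj v x) (hy : G.Adj v y) (hxy : x ≠ y)
      (hsub : {s(v, x), s(v, y)} ⊆ ({s(a, b), s(b, c), s(c, d)} : Finset (Sym2 V))) :
      ∃ v ∈ {v | v ∉ A ∧ G.degree v = 2}, G.incidenceFinset v ⊆ {s(a, b), s(b, c), s(c, d)} := by
    have hinc := incidenceFinset_eq_pair (hdeg v hvA) hx hy hxy
    refine ⟨v, ⟨hvA, ?_⟩, hinc ▸ hsub⟩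
    rw [← card_incidenceFinset_eq_degree, hinc, card_pair (Sym2.congr_right.not.2 hxy)]
  by_cases hbA : b ∈ A
  · exact inner_vertex ((hbip b c Hbc).1 hbA) Hbc.symm Hcd hbd
      (by simp [Sym2.eq_swap])
  · exact inner_vertex hbA Hab.symm Hbc hac (by simp [Sym2.eq_swap])

end Graph

/-- If `G` is bipartite with bipartition `(A, B)` such that every vertex of degree at
least 3 lies in `A`, then Breaker wins the `P₄`-game on `G`. -/
theorem stmt7 {V : Type*} [Fintype V] [DecidableEq V]
    (G : SimpleGraph V) [DecidableRel G.Adj] (A : Set V)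
    (hbip : ∀ u v : V, G.Adj u v → (u ∈ A ↔ v ∉ A))
    (hdeg : ∀ v : V, v ∉ A → G.degree v ≤ 2) :
    BreakerWins G.edgeFinset (p4Sets G) :=
  breakerWins_of_pairwiseDisjoint (pairwiseDisjoint_incidenceFinset hbip)
    (fun v hv => by rw [card_incidenceFinset_eq_degree, hv.2]; omega)
    (fun v _ => G.incidenceFinset_subset v)
    (fun _ hW => exists_incidenceFinset_subset_of_mem_p4Sets hbip hdeg hW)
end

section
/- For every graph G and every integer k ≥ 2, Maker has a winning strategy in the arboricity-k Maker-Breaker game on E(G) if and only if k ≤ ⌈ar(G)/2⌉, where ar(G) denotes the arboricity of G. -/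
open Finset

variable {α : Type*} [DecidableEq α]

open SimpleGraph

/-- The arboricity of a finite edge set `E`: the least `n` such that `E` can be
partitioned into `n` forests. -/
noncomputable def edgeArboricity {V : Type*} (E : Finset (Sym2 V)) : ℕ :=
  sInf {n | ∃ c : Sym2 V → ℕ, (∀ e ∈ E, c e < n) ∧
    ∀ i : ℕ, (SimpleGraph.fromEdgeSet {e : Sym2 V | e ∈ E ∧ c e = i}).IsAcyclic}

/-!
If `ar(G) ≤ 2k - 2`, pair up the forests of a decomposition of `E(G)` into `k - 1` pairs. Within
each pair, Breaker keeps Maker's edges equal to the intersection of two forests that together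
cover every edge he has not claimed. When Maker's edge `e` closes a cycle in the forest of its pair
that avoids `e`, the exchange property of forests gives an edge `f` of that forest, not Maker's,
that can be traded for `e`; Breaker claims `f`. In the end Maker's graph lies in `k - 1` forests.

If `ar(G) ≥ 2k - 1`, subadditivity of arboricity gives every 2-colouring of `E(G)` a colour class
of arboricity at least `k`. So if Maker could not win, Breaker, moving second, could secure
arboricity `k` for himself, and by strategy stealing Maker, moving first, could do the same.
-/

section Game

variable {P Q : Finset α → Prop}

theorem BWin.mono {Q' : Finset α → Prop} (h : ∀ B, Q B → Q' B) :
    ∀ {n : ℕ} {b : Bool} {U B : Finset α}, BWin Q n b U B → BWin Q' n b U B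
  | 0, _, _, _, hQ => h _ hQ
  | _ + 1, true, _, _, hQ => fun e he => BWin.mono h (hQ e he)
  | _ + 1, false, _, _, hQ => let ⟨e, he, hQ⟩ := hQ; ⟨e, he, BWin.mono h hQ⟩

/-- `S` is the whole board: the invariant `S \ B = M ∪ U` makes Maker's final set the complement
of Breaker's. -/
theorem bWin_sdiff_of_not_mWin {S : Finset α} :
    ∀ {n : ℕ} {b : Bool} {U M B : Finset α}, U.card = n → Disjoint M U → S \ B = M ∪ U →
      ¬ MWin P n b U M → BWin (fun B' => ¬ P (S \ B')) n b U B
  | 0, _, U, M, B, hU, _, hS, hW => by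
    rw [card_eq_zero.mp hU, union_empty] at hS
    show ¬ P (S \ B)
    rwa [hS]
  | n + 1, true, U, M, B, hU, hMU, hS, hW => by
    intro e he
    refine bWin_sdiff_of_not_mWin (by simp [card_erase_of_mem he, hU]) ?_ ?_
      (fun h => hW ⟨e, he, h⟩)
    · exact disjoint_insert_left.mpr ⟨notMem_erase e U, hMU.mono_right (erase_subset e U)⟩
    · rw [hS, insert_union, ← union_insert, insert_erase he]
  | n + 1, false, U, M, B, hU, hMU, hS, hW => by
    obtain ⟨e, he, hW⟩ : ∃ e ∈ U, ¬ MWin P n true (U.erase e) M := by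
      simpa [MWin] using hW
    refine ⟨e, he, bWin_sdiff_of_not_mWin (by simp [card_erase_of_mem he, hU])
      (hMU.mono_right (erase_subset e U)) ?_ hW⟩
    rw [sdiff_insert, hS, erase_union_distrib, erase_eq_of_notMem (disjoint_right.mp hMU he)]

/-- Strategy stealing. Maker plays the second player's strategy for `Q` on the board without
the phantom element `y`, which she pretends the opponent has claimed; whenever Breaker takes
the phantom, she designates a new one. -/
theorem mWin_insert_of_bWin (hQ : ∀ S T, S ⊆ T → Q S → Q T) :
    ∀ {m : ℕ} {b : Bool} {W M B : Finset α} {y : α}, W.card = m → y ∉ W → B ⊆ M →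
      BWin Q m b W B → MWin Q (m + 1) (!b) (insert y W) M
  | 0, true, W, M, B, y, hW, _, hBM, h => by
    rw [card_eq_zero.mp hW] at h ⊢
    exact fun _ _ => hQ B M hBM h
  | 0, false, W, M, B, y, hW, _, hBM, h => by
    rw [card_eq_zero.mp hW] at h ⊢
    exact ⟨y, mem_insert_self y ∅, hQ B _ (hBM.trans (subset_insert y M)) h⟩
  | m + 1, false, W, M, B, y, hW, hy, hBM, h => by
    obtain ⟨f, hf, h⟩ := h
    refine ⟨f, mem_insert_of_mem hf, ?_⟩
    rw [erase_insert_of_ne (fun hyf : y = f => hy (hyf ▸ hf))]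
    exact mWin_insert_of_bWin hQ (by simp [card_erase_of_mem hf, hW])
      (fun hy' => hy (mem_of_mem_erase hy')) (insert_subset_insert f hBM) h
  | m + 1, true, W, M, B, y, hW, hy, hBM, h => by
    intro g hg
    obtain ⟨g', hg', z, hz, hgz⟩ :
        ∃ g' ∈ W, ∃ z ∉ W.erase g', (insert y W).erase g = insert z (W.erase g') := by
      obtain rfl | hgW := mem_insert.mp hg
      · obtain ⟨g', hg'⟩ := card_pos.mp (show 0 < W.card by omega)
        exact ⟨g', hg', g', notMem_erase g' W, by rw [erase_insert hy, insert_erase hg']⟩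
      · exact ⟨g, hgW, y, fun hy' => hy (mem_of_mem_erase hy'),
          erase_insert_of_ne (fun hyg : y = g => hy (hyg ▸ hgW))⟩
    rw [hgz]
    exact mWin_insert_of_bWin hQ (by simp [card_erase_of_mem hg', hW]) hz hBM (h g' hg')

theorem mWin_of_bWin (hQ : ∀ S T, S ⊆ T → Q S → Q T) {U : Finset α}
    (h : BWin Q U.card true U ∅) : MWin Q U.card true U ∅ := by
  obtain hU | ⟨e, he⟩ := U.eq_empty_or_nonempty
  · subst hU
    exact h
  · obtain ⟨m, hm⟩ := Nat.exists_eq_succ_of_ne_zero (card_ne_zero_of_mem he)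
    rw [hm] at h ⊢
    rw [← insert_erase he]
    exact mWin_insert_of_bWin hQ (by simp [card_erase_of_mem he, hm]) (notMem_erase e U)
      subset_rfl (h e he)

theorem mWin_of_forall_or_sdiff (hP : ∀ S T, S ⊆ T → P S → P T) {X : Finset α}
    (hsplit : ∀ S, P S ∨ P (X \ S)) : MWin P X.card true X ∅ := by
  by_contra hW
  have hB := bWin_sdiff_of_not_mWin (S := X) (B := ∅) rfl (disjoint_empty_left X)
    (by rw [sdiff_empty, empty_union]) hW
  exact hW (mWin_of_bWin hP (hB.mono fun B hB => (hsplit B).resolve_right hB))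

theorem not_mWin_of_invariant (I : Finset α → Finset α → Prop)
    (herase : ∀ {U M f}, I U M → f ∈ U → I (U.erase f) M)
    (hmove : ∀ {U M e}, I U M → e ∈ U →
      I (U.erase e) (insert e M) ∨ ∃ f ∈ U.erase e, I ((U.erase e).erase f) (insert e M))
    (hend : ∀ {M}, I ∅ M → ¬ P M) :
    ∀ {n : ℕ} {U M : Finset α}, U.card = n → I U M → ¬ MWin P n true U M
  | 0, U, M, hU, hI, hW => by
    rw [card_eq_zero.mp hU] at hI
    exact hend hI hW
  | 1, U, M, hU, hI, ⟨e, he, hW⟩ => by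
    have hUe : U.erase e = ∅ := card_eq_zero.mp (by simp [card_erase_of_mem he, hU])
    rcases hmove hI he with hI' | ⟨f, hf, -⟩
    · exact hend (hUe ▸ hI') hW
    · simp [hUe] at hf
  | m + 2, U, M, hU, hI, ⟨e, he, hW⟩ => by
    obtain ⟨f, hf, hI'⟩ : ∃ f ∈ U.erase e, I ((U.erase e).erase f) (insert e M) := by
      rcases hmove hI he with hI' | h
      · obtain ⟨f, hf⟩ := card_pos.mp
          (show 0 < (U.erase e).card by simp [card_erase_of_mem he, hU])
        exact ⟨f, hf, herase hI' hf⟩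
      · exact h
    exact not_mWin_of_invariant I herase hmove hend
      (by simp [card_erase_of_mem hf, card_erase_of_mem he, hU]) hI' (hW f hf)

end Game

section Forest

variable {V : Type*}

theorem SimpleGraph.IsAcyclic.not_reachable_of_mem_edges {G H : SimpleGraph V} (hG : G.IsAcyclic)
    {u v : V} {p : G.Walk u v} (hp : p.IsPath) {f : Sym2 V} (hf : f ∈ p.edges) (hHG : H ≤ G)
    (hfH : f ∉ H.edgeSet) : ¬ H.Reachable u v := by
  rintro hreach
  obtain ⟨q, hq⟩ := hreach.exists_isPath
  have hqp : q.mapLe hHG = p :=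
    congrArg Subtype.val ((hG.subsingleton_path u v).elim ⟨_, hq.mapLe hHG⟩ ⟨p, hp⟩)
  exact hfH (q.edges_subset_edgeSet (by rwa [← Walk.edges_mapLe_eq_edges hHG, hqp]))

theorem isAcyclic_fromEdgeSet_insert_iff {A : Set (Sym2 V)} {u v : V} :
    (fromEdgeSet (insert s(u, v) A)).IsAcyclic ↔
      (fromEdgeSet A).IsAcyclic ∧ ((fromEdgeSet A).Reachable u v → u = v ∨ s(u, v) ∈ A) := by
  rw [Set.insert_eq, Set.union_comm, fromEdgeSet_union, ← edge, isAcyclic_sup_fromEdgeSet_iff]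
  simp only [fromEdgeSet_adj]
  tauto

theorem isAcyclic_fromEdgeSet_anti {A B : Set (Sym2 V)} (hAB : A ⊆ B)
    (hB : (fromEdgeSet B).IsAcyclic) : (fromEdgeSet A).IsAcyclic :=
  hB.anti (fromEdgeSet_mono hAB)

theorem isAcyclic_fromEdgeSet_of_subsingleton {A : Set (Sym2 V)} (hA : A.Subsingleton) :
    (fromEdgeSet A).IsAcyclic := by
  obtain rfl | ⟨e, rfl⟩ := hA.eq_empty_or_singleton
  · simp
  · induction e using Sym2.ind with
    | _ u v =>
      rw [← insert_empty_eq, isAcyclic_fromEdgeSet_insert_iff]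
      simp [reachable_bot]

/-- The exchange property of the graphic matroid, relative to a subforest `S`. -/
theorem exists_isAcyclic_insert_sdiff {A S : Set (Sym2 V)} {e : Sym2 V} (hSA : S ⊆ A)
    (hA : (fromEdgeSet A).IsAcyclic) (hAe : ¬ (fromEdgeSet (insert e A)).IsAcyclic)
    (hSe : (fromEdgeSet (insert e S)).IsAcyclic) :
    ∃ f ∈ A, f ∉ S ∧ (fromEdgeSet (insert e (A \ {f}))).IsAcyclic := by
  induction e using Sym2.ind with | _ u v => ?_
  simp only [isAcyclic_fromEdgeSet_insert_iff, hA, true_and, Classical.not_imp, not_or]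
    at hAe hSe ⊢
  obtain ⟨hreach, huv, heA⟩ := hAe
  obtain ⟨p, hp⟩ := hreach.exists_isPath
  obtain ⟨f, hfp, hfS⟩ : ∃ f ∈ p.edges, f ∉ S := by
    by_contra! hpS
    have hpS' : ∀ f ∈ p.edges, f ∈ (fromEdgeSet S).edgeSet := fun f hf => by
      have := p.edges_subset_edgeSet hf
      simp only [edgeSet_fromEdgeSet, Set.mem_sdiff] at this ⊢
      exact ⟨hpS f hf, this.2⟩
    exact (hSe.2 ⟨p.transfer _ hpS'⟩).elim huv (fun h => heA (hSA h))
  have hfA : f ∈ A := by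
    have := p.edges_subset_edgeSet hfp
    rw [edgeSet_fromEdgeSet] at this
    exact this.1
  refine ⟨f, hfA, hfS, isAcyclic_fromEdgeSet_anti Set.sdiff_subset hA, fun hreach' => ?_⟩
  exact (hA.not_reachable_of_mem_edges hp hfp (fromEdgeSet_mono Set.sdiff_subset)
    (by simp) hreach').elim

end Forest

section Arboricity

variable {V : Type*}

theorem exists_forest_coloring_lt_edgeArboricity (E : Finset (Sym2 V)) :
    ∃ c : Sym2 V → ℕ, (∀ e ∈ E, c e < edgeArboricity E) ∧
      ∀ i : ℕ, (fromEdgeSet {e : Sym2 V | e ∈ E ∧ c e = i}).IsAcyclic := by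
  classical
  have hne : {n | ∃ c : Sym2 V → ℕ, (∀ e ∈ E, c e < n) ∧
      ∀ i : ℕ, (fromEdgeSet {e : Sym2 V | e ∈ E ∧ c e = i}).IsAcyclic}.Nonempty := by
    refine ⟨E.toList.length, E.toList.idxOf, fun e he => ?_, fun i => ?_⟩
    · exact List.idxOf_lt_length_iff.mpr (mem_toList.mpr he)
    · refine isAcyclic_fromEdgeSet_of_subsingleton fun a ha b hb => ?_
      exact (List.idxOf_inj (mem_toList.mpr ha.1)).mp (ha.2.trans hb.2.symm)
  exact Nat.sInf_mem hne

theorem edgeArboricity_le {E : Finset (Sym2 V)} {n : ℕ} (c : Sym2 V → ℕ)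
    (hc : ∀ e ∈ E, c e < n) (hforest : ∀ i : ℕ, (fromEdgeSet {e | e ∈ E ∧ c e = i}).IsAcyclic) :
    edgeArboricity E ≤ n :=
  Nat.sInf_le ⟨c, hc, hforest⟩

theorem edgeArboricity_mono {E F : Finset (Sym2 V)} (h : E ⊆ F) :
    edgeArboricity E ≤ edgeArboricity F := by
  obtain ⟨c, hc, hforest⟩ := exists_forest_coloring_lt_edgeArboricity F
  refine edgeArboricity_le c (fun e he => hc e (h he)) fun i =>
    isAcyclic_fromEdgeSet_anti ?_ (hforest i)
  exact fun e he => ⟨h he.1, he.2⟩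

theorem edgeArboricity_union_le [DecidableEq V] (E F : Finset (Sym2 V)) :
    edgeArboricity (E ∪ F) ≤ edgeArboricity E + edgeArboricity F := by
  obtain ⟨c, hc, hcforest⟩ := exists_forest_coloring_lt_edgeArboricity E
  obtain ⟨d, hd, hdforest⟩ := exists_forest_coloring_lt_edgeArboricity F
  refine edgeArboricity_le (fun e => if e ∈ E then c e else edgeArboricity E + d e)
    (fun e he => ?_) fun i => ?_
  · split_ifs with hE
    · exact (hc e hE).trans_le (Nat.le_add_right _ _)
    · exact Nat.add_lt_add_left (hd e ((mem_union.mp he).resolve_left hE)) _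
  · rcases lt_or_ge i (edgeArboricity E) with hi | hi
    · refine isAcyclic_fromEdgeSet_anti (fun e ⟨_, hce⟩ => ?_) (hcforest i)
      split_ifs at hce with hE
      · exact ⟨hE, hce⟩
      · omega
    · refine isAcyclic_fromEdgeSet_anti (fun e ⟨he, hce⟩ => ?_)
        (hdforest (i - edgeArboricity E))
      split_ifs at hce with hE
      · exact absurd (hc e hE) (by omega)
      · exact ⟨(mem_union.mp he).resolve_left hE, by omega⟩

end Arboricity

section BreakerStrategy

variable {V : Type*} [DecidableEq V]

/-- Breaker's invariant within one pair of forests of a decomposition: the edges `R` not claimed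
by Breaker are covered by two forests whose common edges are exactly Maker's edges `M`. -/
def TwoForestCover (R M : Finset (Sym2 V)) : Prop :=
  ∃ A₁ A₂ : Finset (Sym2 V), A₁ ∪ A₂ = R ∧ A₁ ∩ A₂ = M ∧
    (fromEdgeSet (A₁ : Set (Sym2 V))).IsAcyclic ∧ (fromEdgeSet (A₂ : Set (Sym2 V))).IsAcyclic

namespace TwoForestCover

variable {R M : Finset (Sym2 V)}

theorem of_disjoint {A₁ A₂ : Finset (Sym2 V)} (h : Disjoint A₁ A₂)
    (h₁ : (fromEdgeSet (A₁ : Set (Sym2 V))).IsAcyclic)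
    (h₂ : (fromEdgeSet (A₂ : Set (Sym2 V))).IsAcyclic) : TwoForestCover (A₁ ∪ A₂) ∅ :=
  ⟨A₁, A₂, rfl, disjoint_iff_inter_eq_empty.mp h, h₁, h₂⟩

theorem isAcyclic (h : TwoForestCover R M) : (fromEdgeSet (M : Set (Sym2 V))).IsAcyclic := by
  obtain ⟨A₁, A₂, -, rfl, h₁, -⟩ := h
  exact isAcyclic_fromEdgeSet_anti (by simp) h₁

theorem erase (h : TwoForestCover R M) {f : Sym2 V} (hf : f ∉ M) :
    TwoForestCover (R.erase f) M := by
  obtain ⟨A₁, A₂, rfl, rfl, h₁, h₂⟩ := h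
  refine ⟨A₁.erase f, A₂.erase f, (erase_union_distrib _ _ _).symm, ?_,
    isAcyclic_fromEdgeSet_anti (by simp) h₁, isAcyclic_fromEdgeSet_anti (by simp) h₂⟩
  rw [erase_inter, inter_erase, erase_idem, erase_eq_of_notMem hf]

theorem insert_or_exists_erase (h : TwoForestCover R M) {e : Sym2 V} (heR : e ∈ R)
    (heM : e ∉ M) :
    TwoForestCover R (insert e M) ∨
      ∃ f ∈ R, f ∉ insert e M ∧ TwoForestCover (R.erase f) (insert e M) := by
  obtain ⟨A₁, A₂, rfl, rfl, h₁, h₂⟩ := h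
  wlog he₁ : e ∉ A₁ generalizing A₁ A₂
  · have := this A₂ A₁ (by rwa [union_comm]) (by rwa [inter_comm]) h₂ h₁ (by simp_all)
    rwa [union_comm, inter_comm]
  have he₂ : e ∈ A₂ := by simp_all
  by_cases hins : (fromEdgeSet ((insert e A₁ : Finset (Sym2 V)) : Set (Sym2 V))).IsAcyclic
  · left
    refine ⟨insert e A₁, A₂, ?_, ?_, hins, h₂⟩
    · rw [insert_union, insert_eq_of_mem (mem_union_right _ he₂)]
    · rw [insert_inter_of_mem he₂]
  · right
    rw [coe_insert] at hins
    obtain ⟨f, hf₁, hfM, hf⟩ := exists_isAcyclic_insert_sdiff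
      (S := ((A₁ ∩ A₂ : Finset (Sym2 V)) : Set (Sym2 V))) (by simp) h₁ hins
      (isAcyclic_fromEdgeSet_anti (by simp [Set.insert_subset_iff, he₂]) h₂)
    simp only [mem_coe, coe_inter, Set.mem_inter_iff] at hf₁ hfM
    have hf₂ : f ∉ A₂ := fun hf₂ => hfM ⟨hf₁, hf₂⟩
    refine ⟨f, mem_union_left _ hf₁, by grind, insert e (A₁.erase f), A₂, ?_, ?_,
      by rwa [coe_insert, coe_erase], h₂⟩
    · ext x; simp only [mem_union, mem_insert, mem_erase]; grind
    · ext x; simp only [mem_inter, mem_insert, mem_erase]; grind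

end TwoForestCover

/-- `κ e` is the index, below `ℓ`, of the pair of forests of a decomposition containing `e`. -/
structure BreakerInvariant (κ : Sym2 V → ℕ) (ℓ : ℕ) (U M : Finset (Sym2 V)) : Prop where
  disjoint : Disjoint U M
  lt : ∀ e ∈ M ∪ U, κ e < ℓ
  cover : ∀ i, TwoForestCover ((M ∪ U).filter (κ · = i)) (M.filter (κ · = i))

namespace BreakerInvariant

variable {κ : Sym2 V → ℕ} {ℓ : ℕ} {U M : Finset (Sym2 V)}

theorem erase (h : BreakerInvariant κ ℓ U M) {f : Sym2 V} (hf : f ∈ U) :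
    BreakerInvariant κ ℓ (U.erase f) M := by
  have hfM : f ∉ M := disjoint_left.mp h.disjoint hf
  have hunion : M ∪ U.erase f = (M ∪ U).erase f := by
    rw [erase_union_distrib, erase_eq_of_notMem hfM]
  refine ⟨h.disjoint.mono_left (erase_subset f U), fun e he => h.lt e ?_, fun i => ?_⟩
  · rw [hunion] at he
    exact mem_of_mem_erase he
  · rw [hunion, filter_erase]
    exact (h.cover i).erase (by simp [hfM])

theorem insert_or_exists_erase (h : BreakerInvariant κ ℓ U M) {e : Sym2 V} (he : e ∈ U) :
    BreakerInvariant κ ℓ (U.erase e) (insert e M) ∨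
      ∃ f ∈ U.erase e, BreakerInvariant κ ℓ ((U.erase e).erase f) (insert e M) := by
  have heM : e ∉ M := disjoint_left.mp h.disjoint he
  have hunion : insert e M ∪ U.erase e = M ∪ U := by
    rw [insert_union, ← union_insert, insert_erase he]
  have hdisj : Disjoint (U.erase e) (insert e M) :=
    disjoint_insert_right.mpr ⟨notMem_erase e U, h.disjoint.mono_left (erase_subset e U)⟩
  rcases (h.cover (κ e)).insert_or_exists_erase (e := e) (by simp [he]) (by simp [heM])
    with hc | ⟨f, hfR, hfM, hc⟩
  · refine .inl ⟨hdisj, hunion ▸ h.lt, fun i => ?_⟩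
    rw [hunion, filter_insert]
    split_ifs with hi
    · exact hi ▸ hc
    · exact h.cover i
  · simp only [mem_filter, mem_union, mem_insert] at hfR hfM
    have hfU : f ∈ U.erase e := by grind
    refine .inr ⟨f, hfU, hdisj.mono_left (erase_subset f _), fun x hx => h.lt x ?_,
      fun i => ?_⟩
    · simp only [mem_union, mem_insert, mem_erase] at hx ⊢
      grind
    · have hunion' : insert e M ∪ (U.erase e).erase f = (M ∪ U).erase f := by
        rw [← hunion, erase_union_distrib, erase_eq_of_notMem (show f ∉ insert e M by grind)]
      rw [hunion', filter_erase, filter_insert]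
      split_ifs with hi
      · exact hi ▸ hc
      · rw [erase_eq_of_notMem (by simp [hfR.2, hi])]
        exact h.cover i

theorem edgeArboricity_le (h : BreakerInvariant κ ℓ ∅ M) : edgeArboricity M ≤ ℓ := by
  refine _root_.edgeArboricity_le κ (fun e he => h.lt e (by simp [he])) fun i => ?_
  have := (h.cover i).isAcyclic
  rwa [coe_filter] at this

theorem of_coloring {E : Finset (Sym2 V)} {ℓ : ℕ} {c : Sym2 V → ℕ}
    (hc : ∀ e ∈ E, c e < 2 * ℓ)
    (hforest : ∀ i : ℕ, (fromEdgeSet {e : Sym2 V | e ∈ E ∧ c e = i}).IsAcyclic) :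
    BreakerInvariant (c · / 2) ℓ E ∅ := by
  refine ⟨disjoint_empty_right E, fun e he => ?_, fun i => ?_⟩
  · have := hc e (by simpa using he)
    omega
  · have hsplit : (∅ ∪ E).filter (c · / 2 = i) =
        E.filter (c · = 2 * i) ∪ E.filter (c · = 2 * i + 1) := by
      rw [empty_union, ← filter_or]
      exact filter_congr fun e _ => by omega
    rw [hsplit, filter_empty]
    refine .of_disjoint (disjoint_filter.mpr fun e _ h => by omega) ?_ ?_ <;>
      simpa only [coe_filter] using hforest _

end BreakerInvariant

end BreakerStrategy

section ArboricityGame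

variable {V : Type*} [DecidableEq V]

theorem not_mWin_of_edgeArboricity_le {E : Finset (Sym2 V)} {ℓ : ℕ}
    (h : edgeArboricity E ≤ 2 * ℓ) :
    ¬ MWin (fun M => ℓ + 1 ≤ edgeArboricity M) E.card true E ∅ := by
  obtain ⟨c, hc, hforest⟩ := exists_forest_coloring_lt_edgeArboricity E
  refine not_mWin_of_invariant (BreakerInvariant (c · / 2) ℓ) (fun hI hf => hI.erase hf)
    (fun hI he => hI.insert_or_exists_erase he) (fun hI hM => ?_) rfl
    (.of_coloring (fun e he => (hc e he).trans_le h) hforest)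
  have := hI.edgeArboricity_le
  omega

theorem mWin_of_two_mul_le_edgeArboricity {E : Finset (Sym2 V)} {k : ℕ}
    (h : 2 * k ≤ edgeArboricity E + 1) :
    MWin (fun M => k ≤ edgeArboricity M) E.card true E ∅ := by
  refine mWin_of_forall_or_sdiff (fun S T hST hS => hS.trans (edgeArboricity_mono hST))
    fun S => ?_
  have hE : edgeArboricity E ≤ edgeArboricity S + edgeArboricity (E \ S) :=
    (edgeArboricity_mono (by simp)).trans (edgeArboricity_union_le S (E \ S))
  omega

end ArboricityGame

/-- **The arboricity-`k` game.** For every graph `G` and `k ≥ 2`, Maker wins the game on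
`E(G)` in which she wins iff her final claimed edge set has arboricity at least `k`, if
and only if `k ≤ ⌈ar(G)/2⌉`. -/
theorem stmt12 {V : Type*} [Fintype V] [DecidableEq V]
    (G : SimpleGraph V) [DecidableRel G.Adj] (k : ℕ) (hk : 2 ≤ k) :
    MWin (fun M => k ≤ edgeArboricity M) G.edgeFinset.card true G.edgeFinset ∅ ↔
      k ≤ (edgeArboricity G.edgeFinset + 1) / 2 := by
  constructor
  · intro hWin
    by_contra! hlt
    obtain ⟨ℓ, rfl⟩ : ∃ ℓ, k = ℓ + 1 := ⟨k - 1, by omega⟩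
    exact not_mWin_of_edgeArboricity_le (by omega) hWin
  · intro h
    exact mWin_of_two_mul_le_edgeArboricity (by omega)
end

section
/- Let T be a tree rooted at r with children x₁,…,x_s of r and subtrees T₁,…,T_s rooted at them, ordered so that ℓ_B(T₁,x₁) ≥ ⋯ ≥ ℓ_B(T_s,x_s). In the rooted-path Maker-Breaker game where Maker tries to claim a longest possible path starting at r: if T = {r} then ℓ_M(T,r) = ℓ_B(T,r) = 0; otherwise ℓ_M(T,r) = 1 + ℓ_B(T₁,x₁) and ℓ_B(T,r) = 1 + ℓ_B(T₂,x₂) (with the convention that the term is 0 when the corresponding subtree does not exist). -/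
open Finset

variable {α : Type*} [DecidableEq α]

open SimpleGraph

/-- Maker's claimed edge set `M` contains a path of length at least `j` in `T` starting
at `r`. -/
def hasPathFrom {V : Type*} (T : SimpleGraph V) (r : V) (j : ℕ)
    (M : Finset (Sym2 V)) : Prop :=
  ∃ (v : V) (p : T.Walk r v), p.IsPath ∧ j ≤ p.length ∧ ∀ e ∈ p.edges, e ∈ M

/-- `ℓ_M(T, r)`: the longest path starting at `r` whose edges Maker can guarantee to claim
in the rooted path game on `T`, Maker moving first. -/
noncomputable def lM {V : Type*} [Finite V] [DecidableEq V]
    (T : SimpleGraph V) (r : V) : ℕ :=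
  sSup {j | MWin (hasPathFrom T r j) T.edgeSet.toFinite.toFinset.card true
    T.edgeSet.toFinite.toFinset ∅}

/-- `ℓ_B(T, r)`: the longest path starting at `r` whose edges Maker can guarantee to claim
in the rooted path game on `T`, Breaker moving first. -/
noncomputable def lB {V : Type*} [Finite V] [DecidableEq V]
    (T : SimpleGraph V) (r : V) : ℕ :=
  sSup {j | MWin (hasPathFrom T r j) T.edgeSet.toFinite.toFinset.card false
    T.edgeSet.toFinite.toFinset ∅}

/-- The vertex set of the subtree hanging from the child `x` of `r`: the component of `x`
after deleting the edge `rx`. -/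
def childVerts {V : Type*} (T : SimpleGraph V) (r x : V) : Set V :=
  {v | (T.deleteEdges {s(r, x)}).Reachable x v}

/-!
Maker, moving first, claims the root edge `r x₁` of a branch of largest value and then answers
Breaker inside `T₁` with her Breaker-first strategy there; moves elsewhere cost her nothing, since
an extra unclaimed edge or an extra claimed edge never hurts her. Breaker plays regionally: the
edges split into the regions `{r x} ∪ E(T_x)`, every long rooted path lies in one region, and he
answers each Maker move inside its region. There, if Maker opens with `r x` the rest is the
Breaker-first game on `T_x`; if she opens inside `T_x`, he takes `r x` and the region is dead.
When Breaker moves first, Maker claims the root edge of one of the two best branches that his first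
move missed, while Breaker can open with `r x₁`; so the second largest value decides.
-/

theorem Nat.mem_iff_le_sSup {S : Set ℕ} (hS : IsLowerSet S) (hne : S.Nonempty)
    (hbdd : BddAbove S) {k : ℕ} : k ∈ S ↔ k ≤ sSup S :=
  ⟨fun hk => le_csSup hbdd hk, fun hk => hS hk (Nat.sSup_mem hne hbdd)⟩

namespace MBGame

variable {P Q : Finset α → Prop} {b : Bool} {U V M : Finset α} {e : α}

def Forces (P : Finset α → Prop) (b : Bool) (U M : Finset α) : Prop :=
  MWin P #U b U M

@[simp]
theorem forces_empty : Forces P b ∅ M ↔ P M := by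
  cases b <;> rfl

theorem forces_true (hU : U.Nonempty) :
    Forces P true U M ↔ ∃ e ∈ U, Forces P false (U.erase e) (insert e M) := by
  obtain ⟨n, hn⟩ := Nat.exists_eq_succ_of_ne_zero hU.card_pos.ne'
  rw [Forces, hn, MWin]
  refine exists_congr fun e => and_congr_right fun he => ?_
  rw [Forces, card_erase_of_mem he, hn, Nat.succ_sub_one]

theorem forces_false (hU : U.Nonempty) :
    Forces P false U M ↔ ∀ e ∈ U, Forces P true (U.erase e) M := by
  obtain ⟨n, hn⟩ := Nat.exists_eq_succ_of_ne_zero hU.card_pos.ne'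
  rw [Forces, hn, MWin]
  refine forall₂_congr fun e he => ?_
  rw [Forces, card_erase_of_mem he, hn, Nat.succ_sub_one]

theorem Forces.mono (hPQ : ∀ S, P S → Q S) (h : Forces P b U M) : Forces Q b U M := by
  induction U using Finset.strongInduction generalizing b M with
  | H U ih =>
  rcases U.eq_empty_or_nonempty with rfl | hU
  · exact forces_empty.2 (hPQ _ (forces_empty.1 h))
  cases b
  · exact (forces_false hU).2 fun e he => ih _ (erase_ssubset he) ((forces_false hU).1 h e he)
  · obtain ⟨e, he, h⟩ := (forces_true hU).1 h
    exact (forces_true hU).2 ⟨e, he, ih _ (erase_ssubset he) h⟩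

theorem forces_union_claimed_iff (C : Finset α) :
    Forces P b U (M ∪ C) ↔ Forces (fun S => P (S ∪ C)) b U M := by
  induction U using Finset.strongInduction generalizing b M with
  | H U ih =>
  rcases U.eq_empty_or_nonempty with rfl | hU
  · simp
  cases b
  · simp only [forces_false hU]
    exact forall₂_congr fun e he => ih _ (erase_ssubset he)
  · simp only [forces_true hU]
    exact exists_congr fun e => and_congr_right fun he => by
      rw [← insert_union, ih _ (erase_ssubset he)]

theorem Forces.exists_final (h : Forces P b U M) : ∃ S ⊆ M ∪ U, P S := by
  induction U using Finset.strongInduction generalizing b M with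
  | H U ih =>
  rcases U.eq_empty_or_nonempty with rfl | hU
  · exact ⟨M, by simp, forces_empty.1 h⟩
  cases b
  · obtain ⟨e, he⟩ := hU
    obtain ⟨S, hS, hPS⟩ := ih _ (erase_ssubset he) ((forces_false ⟨e, he⟩).1 h e he)
    exact ⟨S, hS.trans (union_subset_union_right (erase_subset e U)), hPS⟩
  · obtain ⟨e, he, h⟩ := (forces_true hU).1 h
    obtain ⟨S, hS, hPS⟩ := ih _ (erase_ssubset he) h
    exact ⟨S, hS.trans (by rw [insert_union, ← union_insert, insert_erase he]), hPS⟩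

theorem Forces.of_target (hP : Monotone P) (h : P M) : Forces P b U M := by
  induction U using Finset.strongInduction generalizing b M with
  | H U ih =>
  rcases U.eq_empty_or_nonempty with rfl | hU
  · exact forces_empty.2 h
  cases b
  · exact (forces_false hU).2 fun e he => ih _ (erase_ssubset he) h
  · obtain ⟨e, he⟩ := hU
    exact (forces_true ⟨e, he⟩).2 ⟨e, he, ih _ (erase_ssubset he) (hP (subset_insert e M) h)⟩

theorem Forces.claim (hP : Monotone P) (he : e ∈ U) (h : Forces P b U M) :
    Forces P b (U.erase e) (insert e M) := by
  induction U using Finset.strongInduction generalizing b M e with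
  | H U ih =>
  rcases (U.erase e).eq_empty_or_nonempty with hU' | hU'
  · obtain ⟨S, hS, hPS⟩ := h.exists_final
    refine hU' ▸ forces_empty.2 (hP (hS.trans ?_) hPS)
    rw [← insert_erase he, hU', insert_empty, union_singleton]
  cases b
  · refine (forces_false hU').2 fun g hg => ?_
    have hgU := mem_of_mem_erase hg
    have := ih _ (erase_ssubset hgU) (mem_erase.2 ⟨(ne_of_mem_erase hg).symm, he⟩)
      ((forces_false ⟨g, hgU⟩).1 h g hgU)
    rwa [erase_right_comm] at this
  · obtain ⟨f, hf, h⟩ := (forces_true ⟨e, he⟩).1 h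
    obtain rfl | hfe := eq_or_ne f e
    · obtain ⟨g, hg⟩ := hU'
      exact (forces_true ⟨g, hg⟩).2 ⟨g, hg, ih _ (erase_ssubset hf) hg h⟩
    · have := ih _ (erase_ssubset hf) (mem_erase.2 ⟨hfe.symm, he⟩) h
      rw [erase_right_comm, insert_comm] at this
      exact (forces_true hU').2 ⟨f, mem_erase.2 ⟨hfe, hf⟩, this⟩

theorem Forces.of_false (hP : Monotone P) (h : Forces P false U M) : Forces P true U M := by
  rcases U.eq_empty_or_nonempty with rfl | ⟨e, he⟩
  · exact forces_empty.2 (forces_empty.1 h)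
  · exact (forces_true ⟨e, he⟩).2 ⟨e, he, h.claim hP he⟩

theorem Forces.insert_board (hP : Monotone P) (h : Forces P b U M) :
    Forces P b (insert e U) M := by
  by_cases he : e ∈ U
  · rwa [insert_eq_of_mem he]
  induction U using Finset.strongInduction generalizing b M with
  | H U ih =>
  have herase : ∀ f ∈ U, (insert e U).erase f = insert e (U.erase f) := fun f hf =>
    erase_insert_of_ne fun hef => he (hef ▸ hf)
  cases b
  · refine (forces_false (insert_nonempty e U)).2 fun g hg => ?_
    obtain rfl | hg := mem_insert.1 hg
    · rw [erase_insert he]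
      exact h.of_false hP
    · rw [herase g hg]
      exact ih _ (erase_ssubset hg) ((forces_false ⟨g, hg⟩).1 h g hg)
        fun h' => he (mem_of_mem_erase h')
  · rcases U.eq_empty_or_nonempty with rfl | hU
    · refine (forces_true (insert_nonempty e ∅)).2 ⟨e, mem_insert_self e ∅, ?_⟩
      simpa using hP (subset_insert e M) (forces_empty.1 h)
    obtain ⟨f, hf, h⟩ := (forces_true hU).1 h
    refine (forces_true (insert_nonempty e U)).2 ⟨f, mem_insert_of_mem hf, ?_⟩
    rw [herase f hf]
    exact ih _ (erase_ssubset hf) h fun h' => he (mem_of_mem_erase h')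

theorem Forces.mono_board (hP : Monotone P) (hUV : U ⊆ V) (h : Forces P b U M) :
    Forces P b V M := by
  rw [← union_sdiff_of_subset hUV]
  induction V \ U using Finset.induction_on with
  | empty => rwa [union_empty]
  | insert x s _ ih => rw [union_insert]; exact ih.insert_board hP

theorem Forces.true_erase {f : α} (hf : U.Nonempty → f ∈ U) (h : Forces P false U M) :
    Forces P true (U.erase f) M := by
  rcases U.eq_empty_or_nonempty with rfl | hU
  · exact forces_empty.2 (forces_empty.1 h)
  · exact (forces_false hU).1 h f (hf hU)

theorem not_forces_of_regions {ι : Type*} {I : Set ι} {R : ι → Finset α}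
    {Q : ι → Finset α → Prop} (hdisj : I.PairwiseDisjoint R) (hQ : ∀ i ∈ I, Monotone (Q i))
    (hP : ∀ S, P S → ∃ i ∈ I, Q i (S ∩ R i)) {W M : Finset α}
    (hcov : ∀ e ∈ W, ∃ i ∈ I, e ∈ R i)
    (hB : ∀ i ∈ I, ¬Forces (Q i) true (W ∩ R i) (M ∩ R i)) : ¬Forces P true W M := by
  induction W using Finset.strongInduction generalizing M with
  | H W ih =>
  intro h
  rcases W.eq_empty_or_nonempty with rfl | hW
  · obtain ⟨i, hi, hQi⟩ := hP M (forces_empty.1 h)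
    exact hB i hi (by simpa using hQi)
  obtain ⟨e, he, h⟩ := (forces_true hW).1 h
  obtain ⟨j, hj, hej⟩ := hcov e he
  set V := W.erase e
  -- Breaker answers in the region of Maker's move `e`, or anywhere once that region is exhausted.
  have hBj : ¬Forces (Q j) false (V ∩ R j) (insert e M ∩ R j) := by
    have hejW : e ∈ W ∩ R j := mem_inter.2 ⟨he, hej⟩
    have := hB j hj
    rw [forces_true ⟨e, hejW⟩] at this
    push Not at this
    simpa only [V, erase_inter, insert_inter_of_mem hej] using this e hejW
  obtain ⟨f, hfV, hf⟩ : ∃ f, (V.Nonempty → f ∈ V) ∧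
      ¬Forces (Q j) true ((V ∩ R j).erase f) (insert e M ∩ R j) := by
    rcases (V ∩ R j).eq_empty_or_nonempty with hVj | hVj
    · obtain ⟨f, hf⟩ : ∃ f, V.Nonempty → f ∈ V :=
        V.eq_empty_or_nonempty.elim (fun hV => ⟨e, by simp [hV]⟩) fun ⟨f, hf⟩ => ⟨f, fun _ => hf⟩
      exact ⟨f, hf, by simpa [hVj] using hBj⟩
    · rw [forces_false hVj] at hBj
      push Not at hBj
      obtain ⟨f, hf, hf'⟩ := hBj
      exact ⟨f, fun _ => (mem_inter.1 hf).1, hf'⟩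
  refine ih (V.erase f) ((erase_subset _ _).trans_ssubset (erase_ssubset he))
    (fun x hx => hcov x (mem_of_mem_erase (mem_of_mem_erase hx))) (fun i hi => ?_)
    (h.true_erase hfV)
  obtain rfl | hij := eq_or_ne i j
  · rwa [erase_inter]
  · have heRi : e ∉ R i := fun hei => disjoint_left.1 (hdisj hi hj hij) hei hej
    rw [erase_inter, erase_inter, erase_eq_of_notMem fun h => heRi (mem_inter.1 h).2,
      insert_inter_of_notMem heRi]
    exact fun h' => hB i hi (h'.mono_board (hQ i hi) (erase_subset _ _))

theorem forces_image_iff {β : Type*} [DecidableEq β] {f : α → β} (hf : Function.Injective f)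
    {P' : Finset β → Prop} (hPP : ∀ S, P S ↔ P' (S.image f)) :
    Forces P b U M ↔ Forces P' b (U.image f) (M.image f) := by
  induction U using Finset.strongInduction generalizing b M with
  | H U ih =>
  rcases U.eq_empty_or_nonempty with rfl | hU
  · simpa using hPP M
  cases b
  · rw [forces_false hU, forces_false (hU.image f), forall_mem_image]
    exact forall₂_congr fun e he => by rw [ih _ (erase_ssubset he), image_erase hf]
  · rw [forces_true hU, forces_true (hU.image f), exists_mem_image]
    exact exists_congr fun e => and_congr_right fun he => by
      rw [ih _ (erase_ssubset he), image_erase hf, image_insert]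

section Values

variable {W : Type*} (G : SimpleGraph W) (r : W) {i j k : ℕ}

theorem hasPathFrom_monotone : Monotone (hasPathFrom G r j) :=
  fun _ _ hST ⟨v, p, hp, hj, hpS⟩ => ⟨v, p, hp, hj, fun e he => hST (hpS e he)⟩

theorem hasPathFrom_of_le (hij : i ≤ j) {S : Finset (Sym2 W)} :
    hasPathFrom G r j S → hasPathFrom G r i S :=
  fun ⟨v, p, hp, hj, hpS⟩ => ⟨v, p, hp, hij.trans hj, hpS⟩

variable [Finite W] [DecidableEq W]

theorem forces_hasPathFrom_iff (b : Bool) :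
    Forces (hasPathFrom G r k) b G.edgeSet.toFinite.toFinset ∅ ↔
      k ≤ sSup {j | Forces (hasPathFrom G r j) b G.edgeSet.toFinite.toFinset ∅} := by
  have := Fintype.ofFinite W
  apply Nat.mem_iff_le_sSup
    (S := {j | Forces (hasPathFrom G r j) b G.edgeSet.toFinite.toFinset ∅})
  · exact fun i j hji (hi : Forces _ _ _ _) => hi.mono fun S => hasPathFrom_of_le G r hji
  · exact ⟨0, Forces.of_target (hasPathFrom_monotone G r) ⟨r, .nil, .nil, le_rfl, by simp⟩⟩
  refine ⟨Fintype.card W, fun j (hj : Forces _ _ _ _) => ?_⟩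
  obtain ⟨S, -, v, p, hp, hj, -⟩ := hj.exists_final
  exact hj.trans hp.length_lt.le

theorem le_lM_iff :
    k ≤ lM G r ↔ Forces (hasPathFrom G r k) true G.edgeSet.toFinite.toFinset ∅ :=
  (forces_hasPathFrom_iff G r true).symm

theorem le_lB_iff :
    k ≤ lB G r ↔ Forces (hasPathFrom G r k) false G.edgeSet.toFinite.toFinset ∅ :=
  (forces_hasPathFrom_iff G r false).symm

theorem lB_le_lM : lB G r ≤ lM G r :=
  (le_lM_iff G r).2 (((le_lB_iff G r).1 le_rfl).of_false (hasPathFrom_monotone G r))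

end Values

section Branches

variable {V : Type*} {T : SimpleGraph V} {r x y v : V}

/- The lemmas below write `⟨x, mem_childVerts_self⟩`: the form `⟨x, Reachable.refl x⟩` of `stmt17`
typechecks only after unfolding `childVerts`, which breaks `rw` motives. -/
theorem mem_childVerts_self : x ∈ childVerts T r x :=
  Reachable.refl x

theorem mem_childVerts_of_walk (q : T.Walk x v) (hr : r ∉ q.support) : v ∈ childVerts T r x :=
  reachable_deleteEdges_iff_exists_walk.2 ⟨q, fun h => hr (q.fst_mem_support_of_mem_edges h)⟩

theorem root_notMem_childVerts (hT : T.IsAcyclic) (hx : T.Adj r x) : r ∉ childVerts T r x :=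
  fun h => isBridge_iff.1 (isAcyclic_iff_forall_adj_isBridge.1 hT hx) h.symm

variable [DecidableEq V]

theorem support_subset_childVerts (q : T.Walk x v) (hr : r ∉ q.support) :
    ∀ w ∈ q.support, w ∈ childVerts T r x := fun w hw =>
  mem_childVerts_of_walk (q.takeUntil w hw) fun h => hr (q.support_takeUntil_subset_support hw h)

theorem exists_isPath_of_mem_childVerts (hT : T.IsAcyclic) (hx : T.Adj r x)
    (hv : v ∈ childVerts T r x) : ∃ q : T.Walk x v, q.IsPath ∧ r ∉ q.support := by
  obtain ⟨p, hp⟩ := reachable_deleteEdges_iff_exists_walk.1 hv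
  refine ⟨p.bypass, p.bypass_isPath, fun hr => root_notMem_childVerts hT hx ?_⟩
  refine reachable_deleteEdges_iff_exists_walk.2 ⟨p.bypass.takeUntil r hr, fun h => hp ?_⟩
  exact p.edges_bypass_subset_edges (p.bypass.edges_takeUntil_subset_edges hr h)

theorem childVerts_disjoint (hT : T.IsAcyclic) (hx : T.Adj r x) (hy : T.Adj r y) (hxy : x ≠ y) :
    Disjoint (childVerts T r x) (childVerts T r y) := by
  refine Set.disjoint_left.2 fun v hvx hvy => hxy ?_
  obtain ⟨qx, hqx, hrx⟩ := exists_isPath_of_mem_childVerts hT hx hvx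
  obtain ⟨qy, hqy, hry⟩ := exists_isPath_of_mem_childVerts hT hy hvy
  have := (hT.subsingleton_path r v).elim ⟨.cons hx qx, hqx.cons hrx⟩ ⟨.cons hy qy, hqy.cons hry⟩
  simp only [Subtype.mk.injEq, Walk.cons.injEq] at this
  exact this.1

theorem exists_mem_childVerts (hT : T.Connected) (hv : v ≠ r) :
    ∃ x, T.Adj r x ∧ v ∈ childVerts T r x := by
  obtain ⟨p⟩ := hT.preconnected r v
  obtain ⟨x, hx, q, hq⟩ := Walk.exists_eq_cons_of_ne hv.symm p.bypass
  have hp := p.bypass_isPath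
  rw [hq, Walk.cons_isPath_iff] at hp
  exact ⟨x, hx, mem_childVerts_of_walk q hp.2⟩

variable [Finite V]

noncomputable def branchEdges (T : SimpleGraph V) (r x : V) : Finset (Sym2 V) :=
  (T.induce (childVerts T r x)).edgeSet.toFinite.toFinset.image (Sym2.map (↑))

noncomputable def regionEdges (T : SimpleGraph V) (r x : V) : Finset (Sym2 V) :=
  insert s(r, x) (branchEdges T r x)

theorem mem_branchEdges {e : Sym2 V} :
    e ∈ branchEdges T r x ↔ e ∈ T.edgeSet ∧ ∀ v ∈ e, v ∈ childVerts T r x := by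
  simp only [branchEdges, mem_image, Set.Finite.mem_toFinset]
  constructor
  · rintro ⟨a, ha, rfl⟩
    induction a using Sym2.ind with
    | h a b => exact ⟨ha, by simp [a.2, b.2]⟩
  · induction e using Sym2.ind with
    | h u w =>
    rintro ⟨he, hv⟩
    exact ⟨s(⟨u, hv u (Sym2.mem_mk_left u w)⟩, ⟨w, hv w (Sym2.mem_mk_right u w)⟩), he, rfl⟩

theorem rootEdge_notMem_branchEdges (hT : T.IsAcyclic) (hy : T.Adj r y) :
    s(r, x) ∉ branchEdges T r y :=
  fun h => root_notMem_childVerts hT hy ((mem_branchEdges.1 h).2 r (Sym2.mem_mk_left r x))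

theorem regionEdges_pairwiseDisjoint (hT : T.IsAcyclic) :
    (T.neighborSet r).PairwiseDisjoint (regionEdges T r) := by
  intro x hx y hy hxy
  have hbranch : Disjoint (branchEdges T r x) (branchEdges T r y) := by
    refine disjoint_left.2 fun e hex hey => ?_
    induction e using Sym2.ind with
    | h u w =>
      exact Set.disjoint_left.1 (childVerts_disjoint hT hx hy hxy)
        ((mem_branchEdges.1 hex).2 u (Sym2.mem_mk_left u w))
        ((mem_branchEdges.1 hey).2 u (Sym2.mem_mk_left u w))
  simp only [Function.onFun, regionEdges, disjoint_insert_left, disjoint_insert_right, mem_insert,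
    not_or, Sym2.congr_right]
  exact ⟨⟨hxy.symm, rootEdge_notMem_branchEdges hT hx⟩, rootEdge_notMem_branchEdges hT hy,
    hbranch⟩

theorem exists_mem_regionEdges (hT : T.IsTree) {e : Sym2 V} (he : e ∈ T.edgeSet) :
    ∃ x, T.Adj r x ∧ e ∈ regionEdges T r x := by
  induction e using Sym2.ind with
  | h u w =>
  obtain rfl | hu := eq_or_ne u r
  · exact ⟨w, he, mem_insert_self _ _⟩
  obtain rfl | hw := eq_or_ne w r
  · exact ⟨u, he.symm, Sym2.eq_swap ▸ mem_insert_self _ _⟩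
  obtain ⟨x, hx, hux⟩ := exists_mem_childVerts hT.connected hu
  obtain ⟨q, -, hr⟩ := exists_isPath_of_mem_childVerts hT.isAcyclic hx hux
  have hwx := mem_childVerts_of_walk (r := r) (q.concat (T.mem_edgeSet.1 he)) <| by
    rw [Walk.support_concat]
    simp [hr, hw.symm]
  refine ⟨x, hx, mem_insert_of_mem (mem_branchEdges.2 ⟨he, ?_⟩)⟩
  simp [hux, hwx]

theorem regionEdges_subset_edgeSet (hx : T.Adj r x) :
    regionEdges T r x ⊆ T.edgeSet.toFinite.toFinset :=
  insert_subset (by simpa using hx) fun e he => by simpa using (mem_branchEdges.1 he).1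

end Branches

section BranchPaths

variable {V : Type*} {T : SimpleGraph V} {r x : V} {k : ℕ}

def HasBranchPath (T : SimpleGraph V) (r x : V) (k : ℕ) (S : Finset (Sym2 V)) : Prop :=
  ∃ (v : V) (q : T.Walk x v), q.IsPath ∧ r ∉ q.support ∧ k ≤ q.length ∧ ∀ e ∈ q.edges, e ∈ S

def HasRegionPath (T : SimpleGraph V) (r x : V) (k : ℕ) (S : Finset (Sym2 V)) : Prop :=
  s(r, x) ∈ S ∧ HasBranchPath T r x k S

theorem hasBranchPath_monotone : Monotone (HasBranchPath T r x k) :=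
  fun _ _ hST ⟨v, q, hq, hr, hk, hS⟩ => ⟨v, q, hq, hr, hk, fun e he => hST (hS e he)⟩

theorem hasRegionPath_monotone : Monotone (HasRegionPath T r x k) :=
  fun _ _ hST ⟨hrx, h⟩ => ⟨hST hrx, hasBranchPath_monotone hST h⟩

theorem HasRegionPath.hasPathFrom (hx : T.Adj r x) {S : Finset (Sym2 V)}
    (h : HasRegionPath T r x k S) : hasPathFrom T r (k + 1) S := by
  obtain ⟨hrx, v, q, hq, hr, hk, hS⟩ := h
  refine ⟨v, .cons hx q, hq.cons hr, by simpa using hk, ?_⟩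
  simp only [Walk.edges_cons, List.mem_cons, forall_eq_or_imp]
  exact ⟨hrx, hS⟩

variable [DecidableEq V]

theorem not_forces_hasRegionPath_of_notMem {b : Bool} {U M : Finset (Sym2 V)}
    (h : s(r, x) ∉ M ∪ U) : ¬Forces (HasRegionPath T r x k) b U M := fun hw =>
  let ⟨_, hS, hrx, _⟩ := hw.exists_final
  h (hS hrx)

theorem hasPathFrom_induce_childVerts_iff (hT : T.IsAcyclic) (hx : T.Adj r x)
    (S : Finset (Sym2 (childVerts T r x))) :
    hasPathFrom (T.induce (childVerts T r x)) ⟨x, mem_childVerts_self⟩ k S ↔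
      HasBranchPath T r x k (S.image (Sym2.map (↑))) := by
  have hf : Function.Injective (Sym2.map (Subtype.val : childVerts T r x → V)) :=
    Sym2.map.injective Subtype.val_injective
  constructor
  · rintro ⟨v, p, hp, hk, hS⟩
    obtain ⟨q, hq, hlen, hsupp, hedges⟩ : ∃ q : T.Walk x v, q.IsPath ∧ q.length = p.length ∧
        q.support = p.support.map (↑) ∧ q.edges = p.edges.map (Sym2.map (↑)) :=
      ⟨p.map (Embedding.induce (G := T) _).toHom, hp.map Subtype.val_injective,
        Walk.length_map _ _, Walk.support_map _ _, Walk.edges_map _ _⟩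
    refine ⟨v, q, hq, ?_, hk.trans_eq hlen.symm, ?_⟩
    · rw [hsupp, List.mem_map]
      exact fun ⟨w, _, hw⟩ => root_notMem_childVerts hT hx (Set.mem_of_eq_of_mem hw.symm w.2)
    · rw [hedges]
      intro e he
      obtain ⟨e', he', rfl⟩ := List.mem_map.1 he
      exact mem_image_of_mem _ (hS e' he')
  · rintro ⟨v, q, hq, hr, hk, hS⟩
    have hsupp := support_subset_childVerts q hr
    have hmap := Walk.map_induce q hsupp
    refine ⟨⟨v, hsupp v q.end_mem_support⟩, q.induce _ hsupp, (hmap ▸ hq).of_map, ?_,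
      fun e he => hf.mem_finset_image.1 (hS _ ?_)⟩
    · have hlen := Walk.length_map (Embedding.induce (G := T) _).toHom (q.induce _ hsupp)
      rw [hmap] at hlen
      exact hk.trans_eq hlen
    · have hedges := Walk.edges_map (Embedding.induce (G := T) _).toHom (q.induce _ hsupp)
      rw [hmap] at hedges
      exact hedges ▸ List.mem_map_of_mem he

variable [Finite V]

theorem mem_branchEdges_of_mem_edges {v : V} (q : T.Walk x v) (hr : r ∉ q.support) {e : Sym2 V}
    (he : e ∈ q.edges) : e ∈ branchEdges T r x :=
  mem_branchEdges.2 ⟨q.edges_subset_edgeSet he, fun w hw =>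
    support_subset_childVerts q hr w (Walk.mem_support_of_mem_edges he hw)⟩

theorem exists_hasRegionPath_of_hasPathFrom {S : Finset (Sym2 V)} (h : hasPathFrom T r (k + 1) S) :
    ∃ y, T.Adj r y ∧ HasRegionPath T r y k (S ∩ regionEdges T r y) := by
  obtain ⟨v, p, hp, hk, hS⟩ := h
  cases p with
  | nil => simp at hk
  | cons hy q =>
    rw [Walk.cons_isPath_iff] at hp
    simp only [Walk.edges_cons, List.mem_cons, forall_eq_or_imp, Walk.length_cons] at hS hk
    refine ⟨_, hy, mem_inter.2 ⟨hS.1, mem_insert_self _ _⟩, v, q, hp.1, hp.2, by omega,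
      fun e he => mem_inter.2 ⟨hS.2 e he, mem_insert_of_mem ?_⟩⟩
    exact mem_branchEdges_of_mem_edges q hp.2 he

end BranchPaths

section TreeGame

variable {V : Type*} [DecidableEq V] [Finite V] {T : SimpleGraph V} {r x y : V} {k : ℕ}

theorem le_lB_induce_childVerts_iff (hT : T.IsAcyclic) (hx : T.Adj r x) :
    k ≤ lB (T.induce (childVerts T r x)) ⟨x, mem_childVerts_self⟩ ↔
      Forces (HasBranchPath T r x k) false (branchEdges T r x) ∅ :=
  (le_lB_iff _ _).trans <| (forces_image_iff (Sym2.map.injective Subtype.val_injective)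
    (hasPathFrom_induce_childVerts_iff hT hx)).trans (by rw [image_empty]; rfl)

theorem forces_hasPathFrom_succ (hT : T.IsAcyclic) (hx : T.Adj r x) {U : Finset (Sym2 V)}
    (hU : regionEdges T r x ⊆ U)
    (h : Forces (HasBranchPath T r x k) false (branchEdges T r x) ∅) :
    Forces (hasPathFrom T r (k + 1)) true U ∅ := by
  have hrx : s(r, x) ∈ U := hU (mem_insert_self _ _)
  have hbranch : branchEdges T r x ⊆ U.erase s(r, x) := fun e he =>
    mem_erase.2 ⟨fun h => rootEdge_notMem_branchEdges hT hx (h ▸ he), hU (mem_insert_of_mem he)⟩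
  have h' : Forces (hasPathFrom T r (k + 1)) false (branchEdges T r x) (∅ ∪ {s(r, x)}) :=
    (forces_union_claimed_iff _).2 (h.mono fun S hS => HasRegionPath.hasPathFrom hx
      ⟨mem_union_right _ (mem_singleton_self _), hasBranchPath_monotone subset_union_left hS⟩)
  refine (forces_true ⟨_, hrx⟩).2 ⟨_, hrx, ?_⟩
  rw [empty_union] at h'
  exact h'.mono_board (hasPathFrom_monotone T r) hbranch

theorem not_forces_hasRegionPath (hT : T.IsAcyclic) (hx : T.Adj r x)
    (hk : lB (T.induce (childVerts T r x)) ⟨x, mem_childVerts_self⟩ < k) :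
    ¬Forces (HasRegionPath T r x k) true (regionEdges T r x) ∅ := by
  have hrx := rootEdge_notMem_branchEdges hT hx (x := x)
  rw [regionEdges, forces_true (insert_nonempty _ _)]
  rintro ⟨e, he, hw⟩
  obtain rfl | he := mem_insert.1 he
  · -- Maker took `r x`: what remains is the Breaker-first game on the branch.
    rw [erase_insert hrx] at hw
    refine hk.not_ge ((le_lB_induce_childVerts_iff hT hx).2 ?_)
    refine ((forces_union_claimed_iff {s(r, x)}).1 (by simpa using hw)).mono fun S hS => ?_
    obtain ⟨-, v, q, hq, hr, hkq, hSq⟩ := hS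
    refine ⟨v, q, hq, hr, hkq, fun e he => ?_⟩
    refine (mem_union.1 (hSq e he)).resolve_right fun hex => hr ?_
    rw [mem_singleton.1 hex] at he
    exact q.fst_mem_support_of_mem_edges he
  · -- Breaker answers with `r x`, and the region is dead.
    have hne : s(r, x) ≠ e := fun h => hrx (h ▸ he)
    have hrx' : s(r, x) ∈ (insert s(r, x) (branchEdges T r x)).erase e :=
      mem_erase.2 ⟨hne, mem_insert_self _ _⟩
    exact not_forces_hasRegionPath_of_notMem (by simp [hne])
      ((forces_false ⟨_, hrx'⟩).1 hw _ hrx')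

theorem not_forces_hasPathFrom (hT : T.IsTree) {W : Finset (Sym2 V)}
    (hW : W ⊆ T.edgeSet.toFinite.toFinset)
    (h : ∀ y, T.Adj r y → ¬Forces (HasRegionPath T r y k) true (W ∩ regionEdges T r y) ∅) :
    ¬Forces (hasPathFrom T r (k + 1)) true W ∅ :=
  not_forces_of_regions (regionEdges_pairwiseDisjoint hT.isAcyclic)
    (fun _ _ => hasRegionPath_monotone) (fun _ => exists_hasRegionPath_of_hasPathFrom)
    (fun _ he => exists_mem_regionEdges hT (by simpa using hW he)) (by simpa using h)

theorem lB_induce_add_one_le_lM (hT : T.IsAcyclic) (hx : T.Adj r x) :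
    lB (T.induce (childVerts T r x)) ⟨x, mem_childVerts_self⟩ + 1 ≤ lM T r :=
  (le_lM_iff T r).2 (forces_hasPathFrom_succ hT hx (regionEdges_subset_edgeSet hx)
    ((le_lB_induce_childVerts_iff hT hx).1 le_rfl))

theorem lM_le (hT : T.IsTree)
    (h : ∀ y, T.Adj r y → lB (T.induce (childVerts T r y)) ⟨y, mem_childVerts_self⟩ < k) :
    lM T r ≤ k := by
  by_contra! hk
  refine not_forces_hasPathFrom hT subset_rfl (fun y hy => ?_) ((le_lM_iff T r).1 hk)
  rw [inter_eq_right.2 (regionEdges_subset_edgeSet hy)]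
  exact not_forces_hasRegionPath hT.isAcyclic hy (h y hy)

theorem add_one_le_lB (hT : T.IsAcyclic) (hx : T.Adj r x) (hy : T.Adj r y) (hxy : x ≠ y)
    (hkx : k ≤ lB (T.induce (childVerts T r x)) ⟨x, mem_childVerts_self⟩)
    (hky : k ≤ lB (T.induce (childVerts T r y)) ⟨y, mem_childVerts_self⟩) :
    k + 1 ≤ lB T r := by
  rw [le_lB_iff, forces_false ⟨_, regionEdges_subset_edgeSet hx (mem_insert_self _ _)⟩]
  intro e he
  obtain ⟨z, hz, hkz, hez⟩ : ∃ z, T.Adj r z ∧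
      k ≤ lB (T.induce (childVerts T r z)) ⟨z, mem_childVerts_self⟩ ∧ e ∉ regionEdges T r z := by
    by_cases hey : e ∈ regionEdges T r y
    · exact ⟨x, hx, hkx, disjoint_right.1 (regionEdges_pairwiseDisjoint hT hx hy hxy) hey⟩
    · exact ⟨y, hy, hky, hey⟩
  refine forces_hasPathFrom_succ hT hz (fun f hf => mem_erase.2 ⟨fun h => hez (h ▸ hf), ?_⟩)
    ((le_lB_induce_childVerts_iff hT hz).1 hkz)
  exact regionEdges_subset_edgeSet hz hf

theorem lB_le (hT : T.IsTree) (hx : T.Adj r x)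
    (h : ∀ y, T.Adj r y → y ≠ x →
      lB (T.induce (childVerts T r y)) ⟨y, mem_childVerts_self⟩ < k) :
    lB T r ≤ k := by
  by_contra! hk
  have hrx := regionEdges_subset_edgeSet hx (mem_insert_self _ _)
  refine not_forces_hasPathFrom hT (erase_subset _ _) (fun y hy => ?_)
    ((forces_false ⟨_, hrx⟩).1 ((le_lB_iff T r).1 hk) _ hrx)
  obtain rfl | hyx := eq_or_ne y x
  · exact not_forces_hasRegionPath_of_notMem (by simp)
  · rw [erase_inter, inter_eq_right.2 (regionEdges_subset_edgeSet hy), erase_eq_of_notMem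
      (disjoint_left.1 (regionEdges_pairwiseDisjoint hT.isAcyclic hx hy hyx.symm)
        (mem_insert_self _ _))]
    exact not_forces_hasRegionPath hT.isAcyclic hy (h y hy hyx)

end TreeGame

end MBGame

open MBGame in
/-- **Values of the rooted path game on a tree.** Let `T` be a tree rooted at `r`, with
subtrees `T_x` rooted at the children `x` of `r`, and `μ x = ℓ_B(T_x, x)`. If `r` has no
children then `ℓ_M(T,r) = ℓ_B(T,r) = 0`. Otherwise, for any child `x₁` maximizing `μ`,
`ℓ_M(T,r) = 1 + μ x₁`; and `ℓ_B(T,r) = 1 + max_{x ≠ x₁} μ x` if `r` has at least two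
children (the second largest value of `μ`, in decreasing order), while `ℓ_B(T,r) = 0`
if `x₁` is the only child. -/
theorem stmt17 {V : Type*} [Fintype V] [DecidableEq V]
    (T : SimpleGraph V) [DecidableRel T.Adj] (hT : T.IsTree) (r : V)
    (μ : V → ℕ)
    (hμ : ∀ x ∈ T.neighborFinset r,
      μ x = lB (T.induce (childVerts T r x)) ⟨x, SimpleGraph.Reachable.refl x⟩) :
    (T.neighborFinset r = ∅ → lM T r = 0 ∧ lB T r = 0) ∧
    (∀ x₁ ∈ T.neighborFinset r, (∀ y ∈ T.neighborFinset r, μ y ≤ μ x₁) →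
      lM T r = 1 + μ x₁ ∧
      (∀ h2 : ((T.neighborFinset r).erase x₁).Nonempty,
        lB T r = 1 + ((T.neighborFinset r).erase x₁).sup' h2 μ) ∧
      ((T.neighborFinset r).erase x₁ = ∅ → lB T r = 0)) := by
  have hchild : ∀ y, y ∈ T.neighborFinset r ↔ T.Adj r y := mem_neighborFinset T r
  have hμ' : ∀ y, T.Adj r y →
      lB (T.induce (childVerts T r y)) ⟨y, mem_childVerts_self⟩ = μ y :=
    fun y hy => (hμ y ((hchild y).2 hy)).symm
  refine ⟨fun h0 => ?_, fun x₁ hx₁ hmax => ?_⟩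
  · have hM : lM T r = 0 := Nat.le_zero.1 <| lM_le hT fun y hy =>
      absurd ((hchild y).2 hy) (h0 ▸ notMem_empty y)
    exact ⟨hM, Nat.le_zero.1 (hM ▸ lB_le_lM T r)⟩
  rw [hchild] at hx₁
  have hmax' : ∀ y, T.Adj r y → μ y ≤ μ x₁ := fun y hy => hmax y ((hchild y).2 hy)
  have hother : ∀ y, T.Adj r y → y ≠ x₁ → y ∈ (T.neighborFinset r).erase x₁ :=
    fun y hy hyx => mem_erase.2 ⟨hyx, (hchild y).2 hy⟩
  refine ⟨le_antisymm (lM_le hT fun y hy => ?_) ?_, fun h2 => ?_, fun h1 => ?_⟩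
  · rw [hμ' y hy]; have := hmax' y hy; omega
  · have := lB_induce_add_one_le_lM hT.isAcyclic hx₁; rw [hμ' x₁ hx₁] at this; omega
  · obtain ⟨x₂, hx₂, hsup⟩ := exists_mem_eq_sup' h2 μ
    obtain ⟨hx₂₁, hx₂⟩ := mem_erase.1 hx₂
    rw [hchild] at hx₂
    refine le_antisymm (lB_le hT hx₁ fun y hy hyx => ?_) ?_
    · rw [hμ' y hy]; have := le_sup' μ (hother y hy hyx); omega
    · have := add_one_le_lB hT.isAcyclic hx₁ hx₂ hx₂₁.symm (k := μ x₂)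
        (by rw [hμ' x₁ hx₁]; exact hmax' x₂ hx₂) (by rw [hμ' x₂ hx₂])
      omega
  · exact Nat.le_zero.1 <| lB_le hT hx₁ fun y hy hyx =>
      absurd (hother y hy hyx) (h1 ▸ notMem_empty y)
end
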